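/- arXiv:2010.08647 — 12 statements merged into one kernel-verified Lean document; each statement's English description precedes it below -/
import Mathlib

section
/- Let C be a nonempty subset of a real Banach space X, let λ ∈ (0,1), and let T : C → C be a λ-firmly nonexpansive mapping. Then T is a (c)-mapping; more precisely, for all x, y ∈ C, ‖Tx − Ty‖ ≤ ((1−λ)/(1+λ))‖x − y‖ + (λ/(1+λ))(‖Tx − y‖ + ‖x − Ty‖). -/
/-- A λ-firmly nonexpansive mapping on a nonempty subset `C` of a real
Banach space is a (c)-mapping with `a = (1-λ)/(1+λ)` and `c = λ/(1+λ)`. -/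
theorem lambda_firmly_nonexpansive_is_c_mapping
    {X : Type*} [NormedAddCommGroup X] [NormedSpace ℝ X] [CompleteSpace X]
    (C : Set X) (hC : C.Nonempty) (l : ℝ) (hl : l ∈ Set.Ioo (0 : ℝ) 1)
    (T : X → X) (hT : Set.MapsTo T C C)
    (hfirm : ∀ x ∈ C, ∀ y ∈ C,
      ‖T x - T y‖ ≤ ‖(1 - l) • (x - y) + l • (T x - T y)‖) :
    ∀ x ∈ C, ∀ y ∈ C,
      ‖T x - T y‖ ≤ ((1 - l) / (1 + l)) * ‖x - y‖
        + (l / (1 + l)) * (‖T x - y‖ + ‖x - T y‖) := by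
  intro x hx y hy
  obtain ⟨hl0, hl1⟩ := hl
  have h1l : (0:ℝ) < 1 + l := by linarith
  have h := hfirm x hx y hy
  have key : (1 - l) • (x - y) + l • (T x - T y)
      = (l * (1 - l)) • (T x - y) + ((l * (1 - l)) • (x - T y)
        + (((1 - l) ^ 2) • (x - y) + (l ^ 2) • (T x - T y))) := by
    module
  have hb : ‖(1 - l) • (x - y) + l • (T x - T y)‖
      ≤ l * (1 - l) * ‖T x - y‖ + (l * (1 - l) * ‖x - T y‖
        + ((1 - l) ^ 2 * ‖x - y‖ + l ^ 2 * ‖T x - T y‖)) := by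
    rw [key]
    refine le_trans (norm_add_le _ _) ?_
    gcongr
    · rw [norm_smul, Real.norm_eq_abs, abs_of_pos (by nlinarith)]
    refine le_trans (norm_add_le _ _) ?_
    gcongr
    · rw [norm_smul, Real.norm_eq_abs, abs_of_pos (by nlinarith)]
    refine le_trans (norm_add_le _ _) ?_
    gcongr
    · rw [norm_smul, Real.norm_eq_abs, abs_of_pos (by nlinarith)]
    · rw [norm_smul, Real.norm_eq_abs, abs_of_pos (by nlinarith)]
  have main : (1 + l) * ‖T x - T y‖
      ≤ (1 - l) * ‖x - y‖ + l * (‖T x - y‖ + ‖x - T y‖) := by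
    nlinarith [h, hb]
  rw [div_mul_eq_mul_div, div_mul_eq_mul_div, ← add_div, le_div_iff₀ h1l, mul_comm]
  exact main
end

section
/- Let H be a real Hilbert space and let C be a nonempty closed convex subset of H. Then the following are equivalent: (i) every firmly nonexpansive mapping T : C → C has a fixed point in C; (ii) C is bounded. -/
/-!
If `C` is unbounded, Banach–Steinhaus yields a vector `a` such that `⟪a, ·⟫` is unbounded above
on `C`. The shifted projection `x ↦ P_C (x + a)` is firmly nonexpansive, and a fixed point `x`
of it would maximize `⟪a, ·⟫` on `C`.

If `C` is bounded, a firmly nonexpansive `T` is nonexpansive, so for `u ∈ C` Banach's theorem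
gives the resolvent points `y n ∈ C` with `u - y n = n • (y n - T (y n))`. Monotonicity of
`I - T` gives `‖y n - y m‖² ≤ ‖u - y m‖² - ‖u - y n‖²` for `n < m`; as `‖u - y n‖` is bounded,
`(y n)` is Cauchy. Since `‖y n - T (y n)‖ ≤ diam C / n`, its limit is a fixed point of `T`.
-/

open Set Bornology Filter Topology
open scoped RealInnerProductSpace NNReal

lemma cauchySeq_of_sq_dist_le_sub {X : Type*} [PseudoMetricSpace X] {y : ℕ → X} {A : ℕ → ℝ}
    (hA : BddAbove (range A)) (h : ∀ n m, n < m → dist (y n) (y m) ^ 2 ≤ A m - A n) :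
    CauchySeq y := by
  have hmono : Monotone A := monotone_nat_of_le_succ fun n ↦
    sub_nonneg.1 ((sq_nonneg _).trans (h n (n + 1) n.lt_succ_self))
  have hAcauchy : CauchySeq A := (tendsto_atTop_ciSup hmono hA).cauchySeq
  refine Metric.cauchySeq_iff'.2 fun ε hε ↦ ?_
  obtain ⟨N, hN⟩ := Metric.cauchySeq_iff'.1 hAcauchy (ε ^ 2) (by positivity)
  refine ⟨N, fun n hn ↦ ?_⟩
  rcases hn.eq_or_lt with rfl | hlt
  · simpa using hε
  have hsq : dist (y n) (y N) ^ 2 < ε ^ 2 :=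
    calc dist (y n) (y N) ^ 2 ≤ A n - A N := dist_comm (y n) (y N) ▸ h N n hlt
      _ ≤ dist (A n) (A N) := (Real.dist_eq _ _).symm ▸ le_abs_self _
      _ < ε ^ 2 := hN n hn
  exact lt_of_pow_lt_pow_left₀ 2 hε.le hsq

section NormedSpace

variable {E : Type*} [NormedAddCommGroup E] [NormedSpace ℝ E]

lemma norm_le_norm_of_norm_le_norm_smul_add_smul {d D : E} {l : ℝ} (hl₀ : 0 ≤ l) (hl₁ : l < 1)
    (h : ‖D‖ ≤ ‖(1 - l) • d + l • D‖) : ‖D‖ ≤ ‖d‖ := by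
  have : ‖D‖ ≤ (1 - l) * ‖d‖ + l * ‖D‖ :=
    calc ‖D‖ ≤ ‖(1 - l) • d + l • D‖ := h
      _ ≤ ‖(1 - l) • d‖ + ‖l • D‖ := norm_add_le _ _
      _ = (1 - l) * ‖d‖ + l * ‖D‖ := by
        rw [norm_smul, norm_smul, Real.norm_of_nonneg (by linarith), Real.norm_of_nonneg hl₀]
  nlinarith

lemma LipschitzOnWith.exists_sub_eq_smul_sub_self {T : E → E} {C : Set E}
    (hT : LipschitzOnWith 1 T C) (hTC : MapsTo T C C) (hC : IsComplete C) (hconv : Convex ℝ C)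
    {u : E} (hu : u ∈ C) {t : ℝ} (ht : 0 ≤ t) : ∃ y ∈ C, u - y = t • (y - T y) := by
  set θ : ℝ≥0 := ⟨t / (1 + t), by positivity⟩
  have hθ : (θ : ℝ) = t / (1 + t) := rfl
  have hθ₁ : 1 - (θ : ℝ) = 1 / (1 + t) := by rw [hθ]; field_simp; ring
  set S : E → E := fun x ↦ (1 - (θ : ℝ)) • u + (θ : ℝ) • T x
  have hSC : MapsTo S C C := fun x hx ↦
    hconv hu (hTC hx) (by rw [hθ₁]; positivity) θ.2 (sub_add_cancel 1 _)
  have hS : ContractingWith θ (hSC.restrict S C C) := by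
    refine ⟨?_, LipschitzWith.of_dist_le_mul fun x y ↦ ?_⟩
    · rw [← NNReal.coe_lt_coe, hθ, NNReal.coe_one, div_lt_one (by positivity)]
      linarith
    · have hxy := hT.dist_le_mul x x.2 y y.2
      simp only [Subtype.dist_eq, MapsTo.val_restrict_apply, S, dist_add_left, dist_smul₀] at hxy ⊢
      simpa using mul_le_mul_of_nonneg_left hxy θ.2
  obtain ⟨y, hyC, hy, -⟩ := hS.exists_fixedPoint' hC hSC hu (edist_ne_top u (S u))
  refine ⟨y, hyC, ?_⟩
  have hy' : (1 / (1 + t)) • u + (t / (1 + t)) • T y = y := by rw [← hθ₁, ← hθ]; exact hy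
  linear_combination (norm := match_scalars) (1 + t) • hy' <;> field_simp <;> ring

end NormedSpace

section InnerProductSpace

variable {H : Type*} [NormedAddCommGroup H] [InnerProductSpace ℝ H]

lemma norm_le_norm_add_smul_of_inner_nonneg {x w : H} {c : ℝ} (hc : 0 ≤ c)
    (h : 0 ≤ ⟪x, w⟫) : ‖x‖ ≤ ‖x + c • w‖ := by
  refine le_of_sq_le_sq ?_ (norm_nonneg _)
  rw [norm_add_sq_real, real_inner_smul_right, norm_smul, mul_pow, Real.norm_of_nonneg hc]
  have := mul_nonneg hc h
  nlinarith [sq_nonneg c, sq_nonneg ‖w‖]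

lemma norm_le_norm_smul_add_smul_of_inner_nonneg {d D : H} {l : ℝ} (hl : l ≤ 1)
    (h : 0 ≤ ⟪D, d - D⟫) : ‖D‖ ≤ ‖(1 - l) • d + l • D‖ := by
  have e : (1 - l) • d + l • D = D + (1 - l) • (d - D) := by module
  rw [e]
  exact norm_le_norm_add_smul_of_inner_nonneg (sub_nonneg.2 hl) h

lemma inner_sub_sub_self_nonneg {T : H → H} {x y : H} (h : ‖T x - T y‖ ≤ ‖x - y‖) :
    0 ≤ ⟪x - y, (x - T x) - (y - T y)⟫ := by
  have e : (x - T x) - (y - T y) = (x - y) - (T x - T y) := by abel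
  rw [e, inner_sub_right, real_inner_self_eq_norm_sq]
  nlinarith [real_inner_le_norm (x - y) (T x - T y), norm_nonneg (x - y)]

lemma norm_sub_sq_le_of_resolvent {F : H → H} {u x y : H} {s t : ℝ} (hs : 0 ≤ s)
    (hst : s < t) (hx : u - x = s • F x) (hy : u - y = t • F y)
    (hF : 0 ≤ ⟪x - y, F x - F y⟫) : ‖x - y‖ ^ 2 ≤ ‖u - y‖ ^ 2 - ‖u - x‖ ^ 2 := by
  have hscaled : (s * t) • (F x - F y) = (t - s) • (u - x) - s • (x - y) := by
    linear_combination (norm := module) s • hy - t • hx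
  have hkey : s * ‖x - y‖ ^ 2 ≤ (t - s) * ⟪x - y, u - x⟫ := by
    have h : (s * t) * ⟪x - y, F x - F y⟫ = (t - s) * ⟪x - y, u - x⟫ - s * ‖x - y‖ ^ 2 := by
      rw [← real_inner_smul_right, hscaled, inner_sub_right, real_inner_smul_right,
        real_inner_smul_right, real_inner_self_eq_norm_sq]
    nlinarith [mul_nonneg (mul_nonneg hs (hs.trans hst.le)) hF]
  have hcross : 0 ≤ ⟪u - x, x - y⟫ := by
    rw [real_inner_comm]
    nlinarith [mul_nonneg hs (sq_nonneg ‖x - y‖)]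
  have e : u - y = (u - x) + (x - y) := by abel
  rw [e, norm_add_sq_real]
  linarith

theorem LipschitzOnWith.exists_fixedPoint_of_isBounded {T : H → H} {C : Set H}
    (hT : LipschitzOnWith 1 T C) (hTC : MapsTo T C C) (hne : C.Nonempty) (hC : IsComplete C)
    (hconv : Convex ℝ C) (hbdd : IsBounded C) : ∃ z ∈ C, T z = z := by
  obtain ⟨u, hu⟩ := hne
  choose y hyC hy using fun n : ℕ ↦
    hT.exists_sub_eq_smul_sub_self hTC hC hconv hu (Nat.cast_nonneg n)
  have hR : ∀ n, ‖u - y n‖ ≤ Metric.diam C := fun n ↦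
    dist_eq_norm u (y n) ▸ Metric.dist_le_diam_of_mem hbdd hu (hyC n)
  have hcauchy : CauchySeq y := by
    refine cauchySeq_of_sq_dist_le_sub (A := fun n ↦ ‖u - y n‖ ^ 2)
      ⟨Metric.diam C ^ 2, forall_mem_range.2 fun n ↦ pow_le_pow_left₀ (norm_nonneg _) (hR n) 2⟩
      fun n m hnm ↦ ?_
    rw [dist_eq_norm]
    have hmono := inner_sub_sub_self_nonneg (T := T)
      (by simpa [dist_eq_norm] using hT.dist_le_mul _ (hyC n) _ (hyC m))
    exact norm_sub_sq_le_of_resolvent (F := fun x ↦ x - T x) (Nat.cast_nonneg n)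
      (Nat.cast_lt.2 hnm) (hy n) (hy m) hmono
  obtain ⟨z, hzC, hz⟩ := cauchySeq_tendsto_of_isComplete hC hyC hcauchy
  have hres : Tendsto (fun n ↦ y n - T (y n)) atTop (𝓝 0) := by
    refine squeeze_zero_norm' ?_ (tendsto_const_div_atTop_nhds_zero_nat (Metric.diam C))
    filter_upwards [eventually_gt_atTop 0] with n hn
    rw [le_div_iff₀ (Nat.cast_pos.2 hn), mul_comm, ← Real.norm_natCast, ← norm_smul, ← hy n]
    exact hR n
  have hTy : Tendsto (fun n ↦ T (y n)) atTop (𝓝 z) := by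
    simpa using hz.sub hres
  have hTz : Tendsto (fun n ↦ T (y n)) atTop (𝓝 (T z)) :=
    (hT.continuousOn z hzC).tendsto.comp (tendsto_nhdsWithin_iff.2 ⟨hz, .of_forall hyC⟩)
  exact ⟨z, hzC, tendsto_nhds_unique hTz hTy⟩

lemma isBounded_of_bddAbove_inner [CompleteSpace H] {C : Set H}
    (h : ∀ a : H, BddAbove ((fun c ↦ ⟪a, c⟫) '' C)) : IsBounded C := by
  have hpointwise : ∀ x : H, ∃ B, ∀ c : C, ‖innerSL ℝ (c : H) x‖ ≤ B := by
    intro x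
    obtain ⟨B₁, hB₁⟩ := h x
    obtain ⟨B₂, hB₂⟩ := h (-x)
    refine ⟨max B₁ B₂, fun c ↦ ?_⟩
    have h₁ : ⟪x, c⟫ ≤ B₁ := hB₁ (mem_image_of_mem _ c.2)
    have h₂ : -⟪x, c⟫ ≤ B₂ := by simpa [inner_neg_left] using hB₂ (mem_image_of_mem _ c.2)
    rw [innerSL_apply_apply, real_inner_comm, Real.norm_eq_abs, abs_le]
    constructor <;> linarith [le_max_left B₁ B₂, le_max_right B₁ B₂]
  obtain ⟨B, hB⟩ := banach_steinhaus hpointwise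
  refine isBounded_iff_forall_norm_le.2 ⟨B, fun c hc ↦ ?_⟩
  simpa only [innerSL_apply_norm] using hB ⟨c, hc⟩

def IsMetricProjection (C : Set H) (P : H → H) : Prop :=
  ∀ u, P u ∈ C ∧ ∀ w ∈ C, ⟪u - P u, w - P u⟫ ≤ 0

lemma exists_isMetricProjection {C : Set H} (hne : C.Nonempty) (hC : IsComplete C)
    (hconv : Convex ℝ C) : ∃ P, IsMetricProjection C P := by
  choose P hPC hP using exists_norm_eq_iInf_of_complete_convex hne hC hconv
  exact ⟨P, fun u ↦ ⟨hPC u, (norm_eq_iInf_iff_real_inner_le_zero hconv (hPC u)).1 (hP u)⟩⟩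

namespace IsMetricProjection

variable {C : Set H} {P : H → H}

lemma inner_sub_nonneg (hP : IsMetricProjection C P) (p q : H) :
    0 ≤ ⟪P p - P q, (p - q) - (P p - P q)⟫ := by
  have hp := (hP p).2 (P q) (hP q).1
  have hq := (hP q).2 (P p) (hP p).1
  have e : (p - q) - (P p - P q) = (p - P p) - (q - P q) := by abel
  have e₁ : ⟪P p - P q, p - P p⟫ = -⟪p - P p, P q - P p⟫ := by
    rw [← neg_sub (P q) (P p), inner_neg_left, real_inner_comm]
  rw [e, inner_sub_right, e₁, real_inner_comm (q - P q)]
  linarith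

lemma norm_le_norm_smul_add_smul (hP : IsMetricProjection C P) (a x y : H) {l : ℝ}
    (hl : l ≤ 1) :
    ‖P (x + a) - P (y + a)‖ ≤ ‖(1 - l) • (x - y) + l • (P (x + a) - P (y + a))‖ := by
  have h := hP.inner_sub_nonneg (x + a) (y + a)
  rw [add_sub_add_right_eq_sub] at h
  exact norm_le_norm_smul_add_smul_of_inner_nonneg hl h

lemma inner_le_of_apply_add_eq (hP : IsMetricProjection C P) {a x c : H}
    (hx : P (x + a) = x) (hc : c ∈ C) : ⟪a, c⟫ ≤ ⟪a, x⟫ := by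
  have h := (hP (x + a)).2 c hc
  rw [hx, add_sub_cancel_left, inner_sub_right] at h
  linarith

end IsMetricProjection

end InnerProductSpace

/-- In a real Hilbert space, a nonempty closed convex set `C` has the
fixed point property for firmly nonexpansive mappings iff `C` is bounded. -/
theorem firmly_nonexpansive_fpp_iff_bounded
    {H : Type*} [NormedAddCommGroup H] [InnerProductSpace ℝ H] [CompleteSpace H]
    (C : Set H) (hne : C.Nonempty) (hclosed : IsClosed C) (hconv : Convex ℝ C) :
    (∀ T : H → H, Set.MapsTo T C C →
      (∀ l ∈ Set.Ioo (0 : ℝ) 1, ∀ x ∈ C, ∀ y ∈ C,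
        ‖T x - T y‖ ≤ ‖(1 - l) • (x - y) + l • (T x - T y)‖) →
      ∃ x ∈ C, T x = x) ↔ Bornology.IsBounded C := by
  constructor
  · intro hfpp
    by_contra hunbdd
    obtain ⟨a, ha⟩ : ∃ a : H, ¬BddAbove ((fun c ↦ ⟪a, c⟫) '' C) := by
      contrapose! hunbdd
      exact isBounded_of_bddAbove_inner hunbdd
    obtain ⟨P, hP⟩ := exists_isMetricProjection hne hclosed.isComplete hconv
    obtain ⟨x, -, hx⟩ := hfpp (fun x ↦ P (x + a)) (fun x _ ↦ (hP (x + a)).1)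
      fun l hl x _ y _ ↦ hP.norm_le_norm_smul_add_smul a x y hl.2.le
    exact ha ⟨⟪a, x⟫, forall_mem_image.2 fun c hc ↦ hP.inner_le_of_apply_add_eq hx hc⟩
  · intro hbdd T hTC hfirm
    refine LipschitzOnWith.exists_fixedPoint_of_isBounded ?_ hTC hne hclosed.isComplete hconv hbdd
    refine LipschitzOnWith.of_dist_le_mul fun x hx y hy ↦ ?_
    rw [NNReal.coe_one, one_mul, dist_eq_norm, dist_eq_norm]
    exact norm_le_norm_of_norm_le_norm_smul_add_smul (l := 1 / 2) (by norm_num) (by norm_num)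
      (hfirm _ ⟨by norm_num, by norm_num⟩ x hx y hy)
end

section
/- Let H be a real Hilbert space and let C be a nonempty closed convex subset of H. Then the following are equivalent: (i) every (c)-mapping T : C → C has a fixed point in C; (ii) C is bounded. -/
/-!
On a bounded `C` the displacement `‖x - T x‖` of a (c)-mapping does not increase along orbits,
and comparing `‖x - T^[n + 1] x‖ ≤ diam C` with the lower bound `(n + 1) r`, valid up to a small
error at points whose displacement is close to its infimum `r`, forces `r = 0`. Along an
approximate fixed point sequence `xₙ` a (c)-mapping satisfies
`‖T z - xₙ‖ ≤ ‖z - xₙ‖ + 3 ‖xₙ - T xₙ‖`; in a Hilbert space this yields `‖T z - s‖ ≤ ‖z - s‖`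
for a weak cluster point `s` of `(xₙ)`, so the nearest point of `C` to `s` is fixed by `T`.

Conversely, if `C` is unbounded, by uniform boundedness some `⟪v, ·⟫` is unbounded above on `C`.
The map `x ↦ P_C (x + v)` is firmly nonexpansive, hence a (c)-mapping with `a = 0`, `c = 1 / 2`,
and its fixed points maximise `⟪v, ·⟫` on `C`.
-/

open Filter Topology Bornology Set RealInnerProductSpace

/-- `T` is a (c)-mapping on `C`: there exist `a, c ∈ [0,1]` with `c > 0`, `a + 2c = 1`
and `‖Tx - Ty‖ ≤ a‖x - y‖ + c(‖Tx - y‖ + ‖Ty - x‖)` for all `x, y ∈ C`. -/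
def IsCMapping {X : Type*} [NormedAddCommGroup X] (T : X → X) (C : Set X) : Prop :=
  ∃ a c : ℝ, a ∈ Set.Icc (0 : ℝ) 1 ∧ c ∈ Set.Icc (0 : ℝ) 1 ∧ 0 < c ∧ a + 2 * c = 1 ∧
    ∀ x ∈ C, ∀ y ∈ C, ‖T x - T y‖ ≤ a * ‖x - y‖ + c * (‖T x - y‖ + ‖T y - x‖)

namespace IsCMapping

variable {X : Type*} [NormedAddCommGroup X] {C : Set X} {T : X → X}

lemma exists_pos_le_half (hT : IsCMapping T C) :
    ∃ c : ℝ, 0 < c ∧ c ≤ 1 / 2 ∧ ∀ x ∈ C, ∀ y ∈ C,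
      ‖T x - T y‖ ≤ (1 - 2 * c) * ‖x - y‖ + c * (‖T x - y‖ + ‖T y - x‖) := by
  obtain ⟨a, c, ⟨ha, -⟩, -, hc, hac, hT⟩ := hT
  obtain rfl : a = 1 - 2 * c := by linarith
  exact ⟨c, hc, by linarith, hT⟩

lemma norm_map_sub_map_map_le (hT : IsCMapping T C) (hmT : MapsTo T C C) {x : X} (hx : x ∈ C) :
    ‖T x - T (T x)‖ ≤ ‖x - T x‖ := by
  obtain ⟨c, hc, hc2, hT⟩ := hT.exists_pos_le_half
  have h := hT x hx (T x) (hmT hx)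
  have htri : ‖T (T x) - x‖ ≤ ‖T x - T (T x)‖ + ‖x - T x‖ := by
    simpa only [norm_sub_rev] using norm_sub_le_norm_sub_add_norm_sub (T (T x)) (T x) x
  rw [sub_self, norm_zero, zero_add] at h
  have : (1 - c) * ‖T x - T (T x)‖ ≤ (1 - c) * ‖x - T x‖ := by
    nlinarith [norm_nonneg (x - T x)]
  exact le_of_mul_le_mul_left this (by linarith)

lemma norm_iterate_sub_iterate_succ_le (hT : IsCMapping T C) (hmT : MapsTo T C C) {x : X}
    (hx : x ∈ C) (k : ℕ) : ‖T^[k] x - T^[k + 1] x‖ ≤ ‖x - T x‖ := by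
  induction k with
  | zero => simp
  | succ k ih =>
    rw [Function.iterate_succ_apply' T (k + 1), Function.iterate_succ_apply']
    rw [Function.iterate_succ_apply'] at ih
    exact (hT.norm_map_sub_map_map_le hmT (hmT.iterate k hx)).trans ih

lemma norm_sub_iterate_le (hT : IsCMapping T C) (hmT : MapsTo T C C) {x : X} (hx : x ∈ C)
    (n : ℕ) : ‖x - T^[n] x‖ ≤ n * ‖x - T x‖ := by
  simpa [dist_eq_norm] using (dist_le_range_sum_dist (fun k => T^[k] x) n).trans
    (Finset.sum_le_card_nsmul _ _ _ fun k _ => by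
      simpa only [dist_eq_norm] using hT.norm_iterate_sub_iterate_succ_le hmT hx k)

lemma exists_mul_le_norm_sub_iterate (hT : IsCMapping T C) (hmT : MapsTo T C C) {r : ℝ}
    (hr : ∀ x ∈ C, r ≤ ‖x - T x‖) (n : ℕ) :
    ∃ K : ℝ, 0 ≤ K ∧ ∀ x ∈ C, (n + 1) * r ≤ ‖x - T^[n + 1] x‖ + K * (‖x - T x‖ - r) := by
  obtain ⟨c, hc, hc2, hcT⟩ := hT.exists_pos_le_half
  induction n with
  | zero => exact ⟨0, le_rfl, fun x hx => by simpa using hr x hx⟩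
  | succ n ih =>
    obtain ⟨K, hK, hKx⟩ := ih
    have hc' : 0 ≤ 1 - 2 * c := by linarith
    refine ⟨(K + (1 - 2 * c) * (n + 1) + c * n) / c, by positivity, fun x hx => ?_⟩
    have hTx := hmT hx
    have hdec := hT.norm_map_sub_map_map_le hmT hx
    have hfar : (n + 1) * r ≤ ‖T x - T^[n + 2] x‖ + K * (‖x - T x‖ - r) := by
      have := hKx (T x) hTx
      rw [← Function.iterate_succ_apply] at this
      nlinarith
    have hx_iter : ‖x - T^[n + 1] x‖ ≤ (n + 1) * ‖x - T x‖ := by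
      exact_mod_cast hT.norm_sub_iterate_le hmT hx (n + 1)
    have hTx_iter : ‖T x - T^[n + 1] x‖ ≤ n * ‖x - T x‖ := by
      have := hT.norm_sub_iterate_le hmT hTx n
      rw [← Function.iterate_succ_apply] at this
      nlinarith [(n.cast_nonneg : (0 : ℝ) ≤ n)]
    -- With `a = 1 - 2 c`, the `r`-terms of the (c)-inequality at `x`, `T^[n + 1] x` add up to
    -- `c (n + 2) r`, whence the factor `1 / c` in `K`.
    have hstep := hcT x hx _ (hmT.iterate (n + 1) hx)
    rw [← Function.iterate_succ_apply' T (n + 1), norm_sub_rev (T^[n + 1 + 1] x)] at hstep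
    have key : (n + 2) * r - ‖x - T^[n + 2] x‖ ≤
        (K + (1 - 2 * c) * (n + 1) + c * n) / c * (‖x - T x‖ - r) := by
      rw [div_mul_eq_mul_div, le_div_iff₀ hc]
      nlinarith [mul_le_mul_of_nonneg_left hx_iter hc', mul_le_mul_of_nonneg_left hTx_iter hc.le]
    push_cast
    linarith

lemma exists_norm_sub_map_lt (hT : IsCMapping T C) (hmT : MapsTo T C C) (hne : C.Nonempty)
    (hb : IsBounded C) {ε : ℝ} (hε : 0 < ε) : ∃ x ∈ C, ‖x - T x‖ < ε := by
  set r := sInf ((fun x => ‖x - T x‖) '' C)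
  have hbdd : BddBelow ((fun x => ‖x - T x‖) '' C) := ⟨0, by rintro _ ⟨x, -, rfl⟩; positivity⟩
  have hr : ∀ x ∈ C, r ≤ ‖x - T x‖ := fun x hx => csInf_le hbdd (mem_image_of_mem _ hx)
  suffices r ≤ 0 by
    obtain ⟨_, ⟨x, hx, rfl⟩, hlt⟩ := exists_lt_of_csInf_lt (hne.image _) (this.trans_lt hε)
    exact ⟨x, hx, hlt⟩
  by_contra! hpos
  obtain ⟨n, hn⟩ := exists_nat_gt ((Metric.diam C + 1) / r)
  obtain ⟨K, hK, hKx⟩ := hT.exists_mul_le_norm_sub_iterate hmT hr n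
  obtain ⟨_, ⟨x, hx, rfl⟩, hlt⟩ := exists_lt_of_csInf_lt (hne.image _)
    (lt_add_of_pos_right r (inv_pos.mpr (by linarith : (0 : ℝ) < K + 1)))
  have hclose : K * (‖x - T x‖ - r) ≤ 1 := by
    calc K * (‖x - T x‖ - r) ≤ K * (K + 1)⁻¹ := by gcongr; linarith
      _ ≤ 1 := by rw [← div_eq_mul_inv, div_le_one (by linarith)]; linarith
  have hdiam : ‖x - T^[n + 1] x‖ ≤ Metric.diam C := by
    simpa only [dist_eq_norm] using Metric.dist_le_diam_of_mem hb hx (hmT.iterate _ hx)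
  rw [div_lt_iff₀ hpos] at hn
  nlinarith [hKx x hx]

/-- Condition (E) of García-Falset, Llorens-Fuster and Suzuki. -/
lemma norm_map_sub_le (hT : IsCMapping T C) {z y : X} (hz : z ∈ C) (hy : y ∈ C) :
    ‖T z - y‖ ≤ ‖z - y‖ + 3 * ‖y - T y‖ := by
  obtain ⟨c, hc, hc2, hT⟩ := hT.exists_pos_le_half
  have h := hT z hz y hy
  have h₁ := norm_sub_le_norm_sub_add_norm_sub (T z) (T y) y
  have h₂ := norm_sub_le_norm_sub_add_norm_sub (T y) y z
  rw [norm_sub_rev (T y) y] at h₁ h₂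
  rw [norm_sub_rev y z] at h₂
  have : (1 - c) * ‖T z - y‖ ≤ (1 - c) * (‖z - y‖ + 3 * ‖y - T y‖) := by
    nlinarith [norm_nonneg (y - T y), norm_nonneg (z - y)]
  exact le_of_mul_le_mul_left this (by linarith)

end IsCMapping

section Hilbert

variable {H : Type*} [NormedAddCommGroup H] [InnerProductSpace ℝ H]

lemma exists_mem_forall_inner_sub_nonpos {C : Set H} (hne : C.Nonempty) (hC : IsComplete C)
    (hconv : Convex ℝ C) (u : H) : ∃ z ∈ C, ∀ w ∈ C, ⟪u - z, w - z⟫ ≤ 0 := by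
  obtain ⟨z, hz, hmin⟩ := exists_norm_eq_iInf_of_complete_convex hne hC hconv u
  exact ⟨z, hz, (norm_eq_iInf_iff_real_inner_le_zero hconv hz).mp hmin⟩

lemma eq_of_inner_sub_nonpos_of_norm_sub_le {s z w : H} (hzw : ⟪s - z, w - z⟫ ≤ 0)
    (h : ‖w - s‖ ≤ ‖z - s‖) : w = z := by
  have hsq : ‖w - s‖ ^ 2 = ‖w - z‖ ^ 2 - 2 * ⟪s - z, w - z⟫ + ‖z - s‖ ^ 2 := by
    rw [show w - s = (w - z) - (s - z) by abel, norm_sub_sq_real, real_inner_comm,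
      norm_sub_rev s z]
  have : ‖w - z‖ ^ 2 ≤ 0 := by nlinarith [norm_nonneg (w - s)]
  rwa [sq_nonpos_iff, norm_eq_zero, sub_eq_zero] at this

/-- Firm nonexpansiveness of the nearest-point projection onto a convex set. -/
lemma norm_sub_sq_le_inner_of_inner_sub_nonpos {u u' p q : H} (hp : ⟪u - p, q - p⟫ ≤ 0)
    (hq : ⟪u' - q, p - q⟫ ≤ 0) : ‖p - q‖ ^ 2 ≤ ⟪u - u', p - q⟫ := by
  have : ⟪u - u', p - q⟫ = ‖p - q‖ ^ 2 - ⟪u - p, q - p⟫ - ⟪u' - q, p - q⟫ := by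
    rw [show q - p = -(p - q) by abel, inner_neg_right, ← real_inner_self_eq_norm_sq,
      sub_neg_eq_add, ← inner_add_left, ← inner_sub_left]
    congr 1
    abel
  linarith

lemma norm_sub_le_half_of_sq_le_inner {x y p q : H} (h : ‖p - q‖ ^ 2 ≤ ⟪x - y, p - q⟫) :
    ‖p - q‖ ≤ 1 / 2 * (‖p - y‖ + ‖q - x‖) := by
  have hsum : ⟪p - y, p - q⟫ + ⟪x - q, p - q⟫ = ‖p - q‖ ^ 2 + ⟪x - y, p - q⟫ := by
    rw [← real_inner_self_eq_norm_sq, ← inner_add_left, ← inner_add_left]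
    congr 1
    abel
  have h₁ := real_inner_le_norm (p - y) (p - q)
  have h₂ := real_inner_le_norm (x - q) (p - q)
  rw [norm_sub_rev x q] at h₂
  rcases (norm_nonneg (p - q)).eq_or_lt with h0 | h0
  · rw [← h0]
    positivity
  · nlinarith

lemma isBounded_of_forall_bddAbove_inner [CompleteSpace H] {C : Set H}
    (h : ∀ v : H, BddAbove ((fun x => ⟪v, x⟫) '' C)) : IsBounded C := by
  have hpt : ∀ v : H, ∃ M, ∀ x : C, ‖InnerProductSpace.toDual ℝ H x v‖ ≤ M := by
    intro v
    obtain ⟨M₁, hM₁⟩ := h v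
    obtain ⟨M₂, hM₂⟩ := h (-v)
    refine ⟨max M₁ M₂, fun x => ?_⟩
    have h₁ := hM₁ (mem_image_of_mem _ x.2)
    have h₂ := hM₂ (mem_image_of_mem _ x.2)
    simp only [inner_neg_left] at h₂
    rw [InnerProductSpace.toDual_apply_apply, real_inner_comm, Real.norm_eq_abs, abs_le]
    constructor <;> linarith [le_max_left M₁ M₂, le_max_right M₁ M₂]
  obtain ⟨M, hM⟩ := banach_steinhaus hpt
  refine isBounded_iff_forall_norm_le.mpr ⟨M, fun x hx => ?_⟩
  simpa using hM ⟨x, hx⟩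

lemma exists_tendsto_inner_of_isBounded [CompleteSpace H] {ι : Type*} (𝒰 : Ultrafilter ι)
    {x : ι → H} (hx : IsBounded (range x)) :
    ∃ s : H, ∀ w, Tendsto (fun i => ⟪x i, w⟫) 𝒰 (𝓝 ⟪s, w⟫) := by
  obtain ⟨B, hB⟩ := isBounded_iff_forall_norm_le.mp hx
  let f : ι → WeakDual ℝ H := fun i => StrongDual.toWeakDual (InnerProductSpace.toDual ℝ H (x i))
  have hK := WeakDual.isCompact_closedBall (𝕜 := ℝ) (0 : StrongDual ℝ H) B
  obtain ⟨F, -, hF⟩ := hK.ultrafilter_le_nhds' (𝒰.map f)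
    (Ultrafilter.mem_map.mpr (univ_mem' fun i => by simpa [f] using hB _ (mem_range_self i)))
  refine ⟨(InnerProductSpace.toDual ℝ H).symm (WeakDual.toStrongDual F), fun w => ?_⟩
  rw [InnerProductSpace.toDual_symm_apply]
  exact tendsto_iff_forall_eval_tendsto_topDualPairing.mp hF w

/-- `‖u - x i‖ ^ 2 - ‖v - x i‖ ^ 2 → ‖u - s‖ ^ 2 - ‖v - s‖ ^ 2`: the terms `‖x i‖ ^ 2` cancel and
only inner products with `x i` remain. -/
lemma norm_sub_le_of_tendsto_inner {ι : Type*} (l : Filter ι) [l.NeBot] {x : ι → H}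
    (hx : IsBounded (range x)) {s : H} (hs : ∀ w, Tendsto (fun i => ⟪x i, w⟫) l (𝓝 ⟪s, w⟫))
    {u v : H} {ε : ι → ℝ} (hε : Tendsto ε l (𝓝 0)) (h : ∀ i, ‖u - x i‖ ≤ ‖v - x i‖ + ε i) :
    ‖u - s‖ ≤ ‖v - s‖ := by
  obtain ⟨B, hB⟩ := isBounded_iff_forall_norm_le.mp hx
  have hdiff : ∀ y : H, ‖u - y‖ ^ 2 - ‖v - y‖ ^ 2 = ‖u‖ ^ 2 - ‖v‖ ^ 2 - 2 * ⟪y, u - v⟫ := by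
    intro y
    rw [norm_sub_sq_real, norm_sub_sq_real, inner_sub_right, real_inner_comm y u,
      real_inner_comm y v]
    ring
  have hlim : Tendsto (fun i => ‖u - x i‖ ^ 2 - ‖v - x i‖ ^ 2) l
      (𝓝 (‖u - s‖ ^ 2 - ‖v - s‖ ^ 2)) := by
    simp only [hdiff]
    exact tendsto_const_nhds.sub ((hs (u - v)).const_mul 2)
  have hbound : Tendsto (fun i => 2 * |ε i| * (‖v‖ + B) + ε i ^ 2) l (𝓝 0) := by
    simpa using ((hε.abs.const_mul 2).mul_const (‖v‖ + B)).add (hε.pow 2)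
  have hle : ∀ i, ‖u - x i‖ ^ 2 - ‖v - x i‖ ^ 2 ≤ 2 * |ε i| * (‖v‖ + B) + ε i ^ 2 := by
    intro i
    have hsq := pow_le_pow_left₀ (norm_nonneg _) (h i) 2
    have hvx : ‖v - x i‖ ≤ ‖v‖ + B := (norm_sub_le _ _).trans (by gcongr; exact hB _ ⟨i, rfl⟩)
    nlinarith [le_abs_self (ε i), abs_nonneg (ε i), norm_nonneg (v - x i)]
  have := le_of_tendsto_of_tendsto' hlim hbound hle
  exact (pow_le_pow_iff_left₀ (norm_nonneg _) (norm_nonneg _) two_ne_zero).mp (by linarith)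

theorem IsCMapping.exists_fixedPoint [CompleteSpace H] {C : Set H} {T : H → H}
    (hT : IsCMapping T C) (hmT : MapsTo T C C) (hne : C.Nonempty) (hclosed : IsClosed C)
    (hconv : Convex ℝ C) (hb : IsBounded C) : ∃ z ∈ C, T z = z := by
  choose x hxC hx using fun n : ℕ =>
    hT.exists_norm_sub_map_lt hmT hne hb (Nat.one_div_pos_of_nat (n := n))
  set 𝒰 : Ultrafilter ℕ := Ultrafilter.of atTop
  have hδ : Tendsto (fun n => 3 * ‖x n - T (x n)‖) 𝒰 (𝓝 0) := by
    have := squeeze_zero (fun _ => norm_nonneg _) (fun n => (hx n).le)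
      tendsto_one_div_add_atTop_nhds_zero_nat
    simpa using (this.const_mul 3).mono_left (Ultrafilter.of_le _)
  have hxb : IsBounded (range x) := hb.subset (range_subset_iff.mpr hxC)
  obtain ⟨s, hs⟩ := exists_tendsto_inner_of_isBounded 𝒰 hxb
  obtain ⟨z, hz, hzs⟩ := exists_mem_forall_inner_sub_nonpos hne hclosed.isComplete hconv s
  exact ⟨z, hz, eq_of_inner_sub_nonpos_of_norm_sub_le (hzs _ (hmT hz))
    (norm_sub_le_of_tendsto_inner _ hxb hs hδ fun n => hT.norm_map_sub_le hz (hxC n))⟩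

lemma isBounded_of_forall_isCMapping_exists_fixedPoint [CompleteSpace H] {C : Set H}
    (hne : C.Nonempty) (hclosed : IsClosed C) (hconv : Convex ℝ C)
    (hfpp : ∀ T : H → H, MapsTo T C C → IsCMapping T C → ∃ x ∈ C, T x = x) : IsBounded C := by
  refine isBounded_of_forall_bddAbove_inner fun v => ?_
  choose P hPC hP using exists_mem_forall_inner_sub_nonpos hne hclosed.isComplete hconv
  have hT : IsCMapping (fun x => P (x + v)) C := by
    refine ⟨0, 1 / 2, by norm_num, by norm_num, by norm_num, by norm_num, fun x _ y _ => ?_⟩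
    have := norm_sub_sq_le_inner_of_inner_sub_nonpos (hP (x + v) _ (hPC (y + v)))
      (hP (y + v) _ (hPC (x + v)))
    rw [add_sub_add_right_eq_sub] at this
    simpa using norm_sub_le_half_of_sq_le_inner this
  obtain ⟨x, -, hfix⟩ := hfpp _ (fun x _ => hPC (x + v)) hT
  refine ⟨⟪v, x⟫, ?_⟩
  rintro _ ⟨w, hw, rfl⟩
  have := hP (x + v) w hw
  rw [show P (x + v) = x from hfix, add_sub_cancel_left, inner_sub_right] at this
  linarith

end Hilbert

/-- In a real Hilbert space, a nonempty closed convex set `C` has the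
fixed point property for (c)-mappings iff `C` is bounded. -/
theorem c_mapping_fpp_iff_bounded
    {H : Type*} [NormedAddCommGroup H] [InnerProductSpace ℝ H] [CompleteSpace H]
    (C : Set H) (hne : C.Nonempty) (hclosed : IsClosed C) (hconv : Convex ℝ C) :
    (∀ T : H → H, Set.MapsTo T C C → IsCMapping T C → ∃ x ∈ C, T x = x) ↔
      Bornology.IsBounded C :=
  ⟨isBounded_of_forall_isCMapping_exists_fixedPoint hne hclosed hconv,
    fun hb _ hmT hT => hT.exists_fixedPoint hmT hne hclosed hconv hb⟩
end

section
/- Let H be a real Hilbert space and let C be a nonempty closed convex subset of H. If every (c)-mapping T : C → C has a fixed point in C, then C is bounded. -/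
open RealInnerProductSpace

/-- If every (c)-mapping of a nonempty closed convex subset `C` of a real
Hilbert space into itself has a fixed point, then `C` is bounded. -/
theorem bounded_of_c_mapping_fpp
    {H : Type*} [NormedAddCommGroup H] [InnerProductSpace ℝ H] [CompleteSpace H]
    (C : Set H) (hne : C.Nonempty) (hclosed : IsClosed C) (hconv : Convex ℝ C)
    (hfpp : ∀ T : H → H, Set.MapsTo T C C → IsCMapping T C → ∃ x ∈ C, T x = x) :
    Bornology.IsBounded C := by
  by_contra hub
  -- Step 1: find `v` such that `⟪v, ·⟫` is unbounded above on `C`.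
  have hv : ∃ v : H, ∀ M : ℝ, ∃ x ∈ C, M < ⟪v, x⟫ := by
    by_contra h
    push_neg at h
    apply hub
    rw [isBounded_iff_forall_norm_le]
    have key : ∀ v : H, ∃ M, ∀ x : C, ‖(innerSL ℝ (x : H)) v‖ ≤ M := by
      intro v
      obtain ⟨M₁, hM₁⟩ := h v
      obtain ⟨M₂, hM₂⟩ := h (-v)
      refine ⟨max M₁ M₂, fun x => ?_⟩
      have h1 := hM₁ x x.2
      have h2 := hM₂ x x.2
      rw [inner_neg_left] at h2
      simp only [innerSL_apply_apply, Real.norm_eq_abs]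
      rw [real_inner_comm]
      rw [abs_le]
      constructor
      · nlinarith [le_max_right M₁ M₂]
      · nlinarith [le_max_left M₁ M₂]
    obtain ⟨C', hC'⟩ := banach_steinhaus key
    refine ⟨C', fun x hx => ?_⟩
    have := hC' ⟨x, hx⟩
    rwa [innerSL_apply_norm] at this
  obtain ⟨v, hv⟩ := hv
  -- Step 2: the projection onto `C`.
  have hproj : ∀ u : H, ∃ p ∈ C, ∀ w ∈ C, ⟪u - p, w - p⟫ ≤ 0 := by
    intro u
    obtain ⟨p, hp, hmin⟩ := exists_norm_eq_iInf_of_complete_convex hne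
      (hclosed.isComplete) hconv u
    exact ⟨p, hp, (norm_eq_iInf_iff_real_inner_le_zero hconv hp).mp hmin⟩
  choose P hPmem hPle using hproj
  set T : H → H := fun x => P (x + v) with hT
  have hmaps : Set.MapsTo T C C := fun x _ => hPmem (x + v)
  -- Step 3: `T` is a (c)-mapping (it is firmly nonexpansive).
  have hcm : IsCMapping T C := by
    refine ⟨0, 1/2, by norm_num, by norm_num, by norm_num, by norm_num, ?_⟩
    intro x hx y hy
    set px := T x
    set py := T y
    have h1 := hPle (x + v) py (hPmem (y + v))
    have h2 := hPle (y + v) px (hPmem (x + v))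
    -- firm nonexpansiveness : ‖px - py‖² ≤ ⟪px - py, x - y⟫
    have hfirm : ‖px - py‖ ^ 2 ≤ ⟪px - py, x - y⟫ := by
      have h2' : ⟪py - (y + v), py - px⟫ ≤ 0 := by
        rw [show py - (y + v) = -(y + v - py) from by abel,
          show py - px = -(px - py) from by abel, inner_neg_neg]
        exact h2
      have hsum : ⟪(x - y) - (px - py), py - px⟫ ≤ 0 := by
        have hh := add_nonpos h1 h2'
        rwa [← inner_add_left,
          show (x + v - px) + (py - (y + v)) = (x - y) - (px - py) from by abel] at hh
      have e : ⟪(x - y) - (px - py), py - px⟫ = ‖px - py‖ ^ 2 - ⟪px - py, x - y⟫ := by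
        rw [show py - px = -(px - py) from by abel, inner_neg_right, inner_sub_left,
          real_inner_self_eq_norm_sq, real_inner_comm (x - y)]
        ring
      linarith [e ▸ hsum]
    have hcs : ⟪px - py, x - y⟫ ≤ ‖px - py‖ * ‖x - y‖ := real_inner_le_norm _ _
    have hnle : ‖px - py‖ ≤ ‖x - y‖ := by
      rcases eq_or_lt_of_le (norm_nonneg (px - py)) with h0 | h0
      · rw [← h0]; exact norm_nonneg _
      · nlinarith
    have hsq : (2 * ‖px - py‖) ^ 2 ≤ ‖(px - py) + (x - y)‖ ^ 2 := by
      rw [norm_add_sq_real]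
      nlinarith
    have h2n : 2 * ‖px - py‖ ≤ ‖(px - py) + (x - y)‖ := by
      nlinarith [norm_nonneg ((px - py) + (x - y)), norm_nonneg (px - py)]
    have htri : ‖(px - py) + (x - y)‖ ≤ ‖px - y‖ + ‖py - x‖ := by
      calc ‖(px - py) + (x - y)‖ = ‖(px - y) + (x - py)‖ := by congr 1; abel
        _ ≤ ‖px - y‖ + ‖x - py‖ := norm_add_le _ _
        _ = ‖px - y‖ + ‖py - x‖ := by rw [norm_sub_rev x py]
    linarith
  -- Step 4: a fixed point of `T` contradicts unboundedness of `⟪v, ·⟫` on `C`.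
  obtain ⟨x, hx, hfix⟩ := hfpp T hmaps hcm
  obtain ⟨w, hw, hgt⟩ := hv ⟪v, x⟫
  have := hPle (x + v) w hw
  rw [hT] at hfix
  simp only at hfix
  rw [hfix] at this
  rw [show x + v - x = v by abel, inner_sub_right] at this
  linarith
end

section
/- Let C be a nonempty bounded closed convex subset of a real Hilbert space H and let T : C → C be a mapping satisfying 9‖Tx − Ty‖² ≤ ‖x − y‖² + ‖Tx − y‖² + ‖Ty − x‖² for all x, y ∈ C. Then T has a unique fixed point in C. -/
/-!
Putting `y = T x` and using the triangle inequality for `‖T²x - x‖` gives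
`7‖Tx - T²x‖² ≤ 3‖x - Tx‖²`, so the Picard iterates form a Cauchy sequence, converging to
some `z ∈ C`. Putting `x = z` and `y = Tⁿx₀` and letting `n → ∞` gives `9‖Tz - z‖² ≤ ‖Tz - z‖²`,
so `z` is fixed; two fixed points at distance `d` satisfy `9d² ≤ 3d²`.
-/

open Filter Function Topology

theorem eq_zero_of_mul_sq_le_mul_sq {a b d : ℝ} (hab : b < a) (h : a * d ^ 2 ≤ b * d ^ 2) :
    d = 0 := by
  by_contra hd
  exact hab.not_ge (le_of_mul_le_mul_right h (by positivity))

section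

variable {X : Type*} [MetricSpace X]

theorem cauchySeq_iterate_of_dist_map_map_le {T : X → X} {r : ℝ} (hr₀ : 0 ≤ r) (hr : r < 1)
    (hT : ∀ x, dist (T x) (T (T x)) ≤ r * dist x (T x)) (x : X) :
    CauchySeq fun n => T^[n] x := by
  refine cauchySeq_of_le_geometric r (dist x (T x)) hr fun n => ?_
  induction n with
  | zero => simp
  | succ n ih =>
    calc dist (T^[n + 1] x) (T^[n + 1 + 1] x) = dist (T (T^[n] x)) (T (T (T^[n] x))) := by
          simp only [iterate_succ_apply']
      _ ≤ r * dist (T^[n] x) (T (T^[n] x)) := hT _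
      _ = r * dist (T^[n] x) (T^[n + 1] x) := by rw [iterate_succ_apply']
      _ ≤ r * (dist x (T x) * r ^ n) := by gcongr
      _ = dist x (T x) * r ^ (n + 1) := by ring

def QuadraticContractive (k : ℝ) (T : X → X) : Prop :=
  ∀ x y, k * dist (T x) (T y) ^ 2 ≤ dist x y ^ 2 + dist (T x) y ^ 2 + dist (T y) x ^ 2

namespace QuadraticContractive

variable {k : ℝ} {T : X → X}

theorem dist_map_map_sq_le (hT : QuadraticContractive k T) (x : X) :
    (k - 2) * dist (T x) (T (T x)) ^ 2 ≤ 3 * dist x (T x) ^ 2 := by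
  have h := hT x (T x)
  have htri : dist (T (T x)) x ≤ dist (T x) (T (T x)) + dist x (T x) := by
    rw [dist_comm (T x), dist_comm x]; exact dist_triangle _ _ _
  rw [dist_self] at h
  nlinarith [sq_nonneg (dist (T x) (T (T x)) - dist x (T x)), dist_nonneg (x := T (T x)) (y := x)]

theorem dist_map_map_le (hT : QuadraticContractive k T) (hk : 2 < k) (x : X) :
    dist (T x) (T (T x)) ≤ √(3 / (k - 2)) * dist x (T x) := by
  have hk' : 0 < k - 2 := by linarith
  calc dist (T x) (T (T x)) = √(dist (T x) (T (T x)) ^ 2) := (Real.sqrt_sq dist_nonneg).symm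
    _ ≤ √(3 / (k - 2) * dist x (T x) ^ 2) := by
        gcongr
        rw [div_mul_eq_mul_div, le_div_iff₀ hk', mul_comm]
        exact hT.dist_map_map_sq_le x
    _ = √(3 / (k - 2)) * dist x (T x) := by
        rw [Real.sqrt_mul (by positivity), Real.sqrt_sq dist_nonneg]

theorem cauchySeq_iterate (hT : QuadraticContractive k T) (hk : 5 < k) (x : X) :
    CauchySeq fun n => T^[n] x := by
  refine cauchySeq_iterate_of_dist_map_map_le (Real.sqrt_nonneg _) ?_
    (hT.dist_map_map_le (by linarith)) x
  rw [Real.sqrt_lt' one_pos, div_lt_iff₀ (by linarith)]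
  linarith

theorem isFixedPt_of_tendsto_iterate (hT : QuadraticContractive k T) (hk : 1 < k) {x z : X}
    (hz : Tendsto (fun n => T^[n] x) atTop (𝓝 z)) : IsFixedPt T z := by
  have hz' : Tendsto (fun n => T^[n + 1] x) atTop (𝓝 z) := hz.comp (tendsto_add_atTop_nat 1)
  have hTz : Tendsto (fun n => dist (T z) (T^[n] x)) atTop (𝓝 (dist (T z) z)) :=
    tendsto_const_nhds.dist hz
  have hlim : k * dist (T z) z ^ 2 ≤ dist z z ^ 2 + dist (T z) z ^ 2 + dist z z ^ 2 :=
    le_of_tendsto_of_tendsto' (((hTz.comp (tendsto_add_atTop_nat 1)).pow 2).const_mul k)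
      ((((tendsto_const_nhds.dist hz).pow 2).add (hTz.pow 2)).add
        ((hz'.dist tendsto_const_nhds).pow 2))
      fun n => by simpa only [comp_apply, iterate_succ_apply'] using hT z (T^[n] x)
  rw [dist_self] at hlim
  exact dist_eq_zero.1 (eq_zero_of_mul_sq_le_mul_sq hk (by linarith))

theorem eq_of_isFixedPt (hT : QuadraticContractive k T) (hk : 3 < k) {x y : X}
    (hx : IsFixedPt T x) (hy : IsFixedPt T y) : x = y := by
  have h := hT x y
  rw [hx.eq, hy.eq, dist_comm y x] at h
  exact dist_eq_zero.1 (eq_zero_of_mul_sq_le_mul_sq hk (by linarith))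

theorem existsUnique_isFixedPt [CompleteSpace X] [Nonempty X] (hT : QuadraticContractive k T)
    (hk : 5 < k) : ∃! x, IsFixedPt T x := by
  obtain ⟨x⟩ := ‹Nonempty X›
  obtain ⟨z, hz⟩ := cauchySeq_tendsto_of_complete (hT.cauchySeq_iterate hk x)
  have hfix := hT.isFixedPt_of_tendsto_iterate (by linarith) hz
  exact ⟨z, hfix, fun y hy => hT.eq_of_isFixedPt (by linarith) hy hfix⟩

end QuadraticContractive

end

theorem quadratic_c_mapping_unique_fixed_point_general
    {H : Type*} [NormedAddCommGroup H] [CompleteSpace H]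
    (C : Set H) (hne : C.Nonempty)
    (hclosed : IsClosed C)
    (T : H → H) (hT : Set.MapsTo T C C)
    (hineq : ∀ x ∈ C, ∀ y ∈ C,
      9 * ‖T x - T y‖ ^ 2 ≤ ‖x - y‖ ^ 2 + ‖T x - y‖ ^ 2 + ‖T y - x‖ ^ 2) :
    ∃! z, z ∈ C ∧ T z = z := by
  have : CompleteSpace C := hclosed.completeSpace_coe
  have : Nonempty C := hne.to_subtype
  have hquad : QuadraticContractive 9 (hT.restrict T C C) := fun x y => by
    simpa only [Subtype.dist_eq, Set.MapsTo.val_restrict_apply, dist_eq_norm] using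
      hineq x x.2 y y.2
  obtain ⟨⟨z, hzC⟩, hz, huniq⟩ := hquad.existsUnique_isFixedPt (by norm_num)
  refine ⟨z, ⟨hzC, congrArg Subtype.val hz⟩, fun w ⟨hwC, hw⟩ => ?_⟩
  exact congrArg Subtype.val (huniq ⟨w, hwC⟩ (Subtype.ext hw))

/-- A self-mapping of a nonempty bounded closed convex subset of a real
Hilbert space satisfying `9‖Tx - Ty‖² ≤ ‖x - y‖² + ‖Tx - y‖² + ‖Ty - x‖²` has a
unique fixed point. -/
theorem quadratic_c_mapping_unique_fixed_point
    {H : Type*} [NormedAddCommGroup H] [InnerProductSpace ℝ H] [CompleteSpace H]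
    (C : Set H) (hne : C.Nonempty) (hbdd : Bornology.IsBounded C)
    (hclosed : IsClosed C) (hconv : Convex ℝ C)
    (T : H → H) (hT : Set.MapsTo T C C)
    (hineq : ∀ x ∈ C, ∀ y ∈ C,
      9 * ‖T x - T y‖ ^ 2 ≤ ‖x - y‖ ^ 2 + ‖T x - y‖ ^ 2 + ‖T y - x‖ ^ 2) :
    ∃! z, z ∈ C ∧ T z = z :=
  quadratic_c_mapping_unique_fixed_point_general C hne hclosed T hT hineq
end

section
/- Let X be a uniformly convex real Banach space, let C be a nonempty closed convex subset of X, and let T : C → C be a (c)-mapping. If there exists x₀ ∈ C such that the orbit O(x₀) = {Tⁿx₀ : n ≥ 0} is bounded, then T has a fixed point in C. -/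
open Filter Set Topology

theorem exists_forall_norm_add_le_two_sub_mul {X : Type*} [NormedAddCommGroup X]
    [NormedSpace ℝ X] [UniformConvexSpace X] {ε : ℝ} (hε : 0 < ε) :
    ∃ δ > 0, ∀ ⦃R : ℝ⦄, 0 < R → ∀ ⦃x y : X⦄, ‖x‖ ≤ R → ‖y‖ ≤ R → ε * R ≤ ‖x - y‖ →
      ‖x + y‖ ≤ (2 - δ) * R := by
  obtain ⟨δ, hδ, h⟩ := exists_forall_closed_ball_dist_add_le_two_sub X hε
  refine ⟨δ, hδ, fun R hR x y hx hy hxy => ?_⟩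
  have hRinv : 0 ≤ R⁻¹ := inv_nonneg.2 hR.le
  have hscaled := @h (R⁻¹ • x) ?_ (R⁻¹ • y) ?_ ?_
  · rwa [← smul_add, norm_smul_of_nonneg hRinv, inv_mul_le_iff₀ hR, mul_comm] at hscaled
  · rwa [norm_smul_of_nonneg hRinv, inv_mul_le_iff₀ hR, mul_one]
  · rwa [norm_smul_of_nonneg hRinv, inv_mul_le_iff₀ hR, mul_one]
  · rwa [← smul_sub, norm_smul_of_nonneg hRinv, le_inv_mul_iff₀ hR, mul_comm]

theorem IsGLB.existsUnique_of_forall_dist_le {α : Type*} [MetricSpace α] [CompleteSpace α]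
    {f : α → ℝ} {s : Set α} {m : ℝ} (hm : IsGLB (f '' s) m) (hs : IsClosed s)
    (hf : Continuous f)
    (hclose : ∀ d > 0, ∃ ε > 0, ∀ x ∈ s, ∀ y ∈ s, f x < m + ε → f y < m + ε → dist x y ≤ d) :
    ∃! z, z ∈ s ∧ f z = m := by
  have hne : (f '' s).Nonempty :=
    nonempty_iff_ne_empty.2 fun h => not_isTop m (isGLB_empty_iff.1 (h ▸ hm))
  obtain ⟨v, -, -, hv, hvs⟩ := hm.exists_seq_antitone_tendsto hne
  choose x hxs hfx using hvs
  have hcauchy : CauchySeq x := Metric.cauchySeq_iff.2 fun d hd => by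
    obtain ⟨ε, hε, hclose⟩ := hclose (d / 2) (half_pos hd)
    obtain ⟨N, hN⟩ := eventually_atTop.1 (hv.eventually (gt_mem_nhds (lt_add_of_pos_right m hε)))
    refine ⟨N, fun k hk l hl => (hclose _ (hxs k) _ (hxs l) ?_ ?_).trans_lt (half_lt_self hd)⟩
    · exact hfx k ▸ hN k hk
    · exact hfx l ▸ hN l hl
  obtain ⟨z, hz⟩ := cauchySeq_tendsto_of_complete hcauchy
  have hzs : z ∈ s := hs.mem_of_tendsto hz (.of_forall hxs)
  have hfz : f z = m :=
    tendsto_nhds_unique ((hf.tendsto z).comp hz) (by simpa [Function.comp_def, hfx] using hv)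
  refine ⟨z, ⟨hzs, hfz⟩, fun y ⟨hys, hfy⟩ => eq_of_forall_dist_le fun d hd => ?_⟩
  obtain ⟨ε, hε, hclose⟩ := hclose d hd
  exact hclose y hys z hzs (by linarith) (by linarith)

noncomputable def asymptoticRadius {X : Type*} [NormedAddCommGroup X] (u : ℕ → X) (v : X) : ℝ :=
  limsup (fun n => ‖u n - v‖) atTop

section AsymptoticRadius

variable {X : Type*} [NormedAddCommGroup X] {u : ℕ → X}

theorem asymptoticRadius_nat_add (u : ℕ → X) (k : ℕ) :
    asymptoticRadius (fun n => u (n + k)) = asymptoticRadius u :=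
  funext fun v => limsup_nat_add (fun n => ‖u n - v‖) k

theorem asymptoticRadius_le_of_eventually_le {v : X} {B : ℝ}
    (h : ∀ᶠ n in atTop, ‖u n - v‖ ≤ B) : asymptoticRadius u v ≤ B :=
  limsup_le_of_le (isCoboundedUnder_le_of_le atTop fun _ => norm_nonneg _) h

theorem asymptoticRadius_le_of_forall_eventually_le_add {v : X} {B : ℝ}
    (h : ∀ ε > 0, ∀ᶠ n in atTop, ‖u n - v‖ ≤ B + ε) : asymptoticRadius u v ≤ B :=
  le_of_forall_pos_le_add fun ε hε => asymptoticRadius_le_of_eventually_le (h ε hε)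

variable (hu : Bornology.IsBounded (range u))
include hu

theorem isBoundedUnder_norm_sub (v : X) :
    IsBoundedUnder (· ≤ ·) atTop fun n => ‖u n - v‖ := by
  obtain ⟨M, hM⟩ := isBounded_iff_forall_norm_le.1 hu
  exact isBoundedUnder_of
    ⟨M + ‖v‖, fun n => (norm_sub_le _ _).trans (by gcongr; exact hM _ ⟨n, rfl⟩)⟩

theorem eventually_norm_sub_lt_of_asymptoticRadius_lt {v : X} {b : ℝ}
    (h : asymptoticRadius u v < b) : ∀ᶠ n in atTop, ‖u n - v‖ < b :=
  eventually_lt_of_limsup_lt h (isBoundedUnder_norm_sub hu v)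

theorem asymptoticRadius_nonneg (v : X) : 0 ≤ asymptoticRadius u v :=
  le_limsup_of_frequently_le (.of_forall fun _ => norm_nonneg _) (isBoundedUnder_norm_sub hu v)

theorem lipschitzWith_asymptoticRadius : LipschitzWith 1 (asymptoticRadius u) := by
  refine .of_le_add fun v w => asymptoticRadius_le_of_forall_eventually_le_add fun ε hε => ?_
  filter_upwards [eventually_norm_sub_lt_of_asymptoticRadius_lt hu
    (lt_add_of_pos_right (asymptoticRadius u w) hε)] with n hn
  calc ‖u n - v‖ ≤ ‖u n - w‖ + ‖w - v‖ := norm_sub_le_norm_sub_add_norm_sub _ _ _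
    _ ≤ asymptoticRadius u w + dist v w + ε := by rw [dist_comm, dist_eq_norm]; linarith

theorem norm_sub_le_asymptoticRadius_add (p q : X) :
    ‖p - q‖ ≤ asymptoticRadius u p + asymptoticRadius u q := by
  refine le_of_forall_pos_le_add fun ε hε => ?_
  obtain ⟨n, hnp, hnq⟩ := (eventually_norm_sub_lt_of_asymptoticRadius_lt hu
    (lt_add_of_pos_right (asymptoticRadius u p) (half_pos hε))).and
    (eventually_norm_sub_lt_of_asymptoticRadius_lt hu
    (lt_add_of_pos_right (asymptoticRadius u q) (half_pos hε))) |>.exists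
  calc ‖p - q‖ = ‖(u n - q) - (u n - p)‖ := by rw [sub_sub_sub_cancel_left]
    _ ≤ ‖u n - q‖ + ‖u n - p‖ := norm_sub_le _ _
    _ ≤ _ := by linarith

end AsymptoticRadius

section UniformConvex

variable {X : Type*} [NormedAddCommGroup X] [NormedSpace ℝ X] [UniformConvexSpace X]
  {u : ℕ → X} (hu : Bornology.IsBounded (range u))
include hu

theorem exists_asymptoticRadius_midpoint_le {ε : ℝ} (hε : 0 < ε) :
    ∃ δ > 0, ∀ ⦃R : ℝ⦄, 0 < R → ∀ ⦃p q : X⦄, asymptoticRadius u p < R →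
      asymptoticRadius u q < R → ε * R ≤ ‖p - q‖ →
      asymptoticRadius u (midpoint ℝ p q) ≤ (1 - δ) * R := by
  obtain ⟨δ, hδ, h⟩ := exists_forall_norm_add_le_two_sub_mul (X := X) hε
  refine ⟨δ / 2, half_pos hδ, fun R hR p q hp hq hpq => asymptoticRadius_le_of_eventually_le ?_⟩
  filter_upwards [eventually_norm_sub_lt_of_asymptoticRadius_lt hu hp,
    eventually_norm_sub_lt_of_asymptoticRadius_lt hu hq] with n hnp hnq
  have hsum := h hR hnp.le hnq.le (by rwa [sub_sub_sub_cancel_left, norm_sub_rev])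
  have hmid : u n - midpoint ℝ p q = (2⁻¹ : ℝ) • ((u n - p) + (u n - q)) := by
    rw [midpoint_eq_smul_add, invOf_eq_inv]; module
  rw [hmid, norm_smul_of_nonneg (by norm_num)]
  linarith

theorem exists_forall_dist_le_of_asymptoticRadius_lt_add {C : Set X} (hC : Convex ℝ C) {m : ℝ}
    (hm : ∀ x ∈ C, m ≤ asymptoticRadius u x) {d : ℝ} (hd : 0 < d) :
    ∃ ε > 0, ∀ p ∈ C, ∀ q ∈ C, asymptoticRadius u p < m + ε → asymptoticRadius u q < m + ε →
      dist p q ≤ d := by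
  rcases le_or_gt m 0 with hm0 | hm0
  · refine ⟨d / 2, half_pos hd, fun p _ q _ hp hq => ?_⟩
    rw [dist_eq_norm]
    linarith [norm_sub_le_asymptoticRadius_add hu p q]
  obtain ⟨δ, hδ, hmid⟩ := exists_asymptoticRadius_midpoint_le hu (div_pos hd (add_pos hm0 one_pos))
  -- `ε ≤ 1` keeps the radius `m + ε` in the range where `δ` works, and `ε ≤ δ m` makes the
  -- midpoint of two far-apart `ε`-minimizers undercut `m`.
  set ε := min 1 (δ * m)
  refine ⟨ε, by positivity, fun p hp q hq hpr hqr => ?_⟩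
  by_contra! hpq
  have hε1 : ε ≤ 1 := min_le_left _ _
  have hεm : ε ≤ δ * m := min_le_right _ _
  have hdR : d / (m + 1) * (m + ε) ≤ ‖p - q‖ := by
    rw [div_mul_eq_mul_div, div_le_iff₀ (by positivity)]
    rw [dist_eq_norm] at hpq
    nlinarith
  have hlow := hm _ (hC.midpoint_mem hp hq)
  have hup := hmid (by positivity) hpr hqr hdR
  nlinarith [mul_pos hδ (show 0 < ε by positivity)]

theorem existsUnique_asymptoticRadius_eq_of_isGLB [CompleteSpace X] {C : Set X}
    (hC : IsClosed C) (hconv : Convex ℝ C) {m : ℝ} (hm : IsGLB (asymptoticRadius u '' C) m) :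
    ∃! z, z ∈ C ∧ asymptoticRadius u z = m :=
  hm.existsUnique_of_forall_dist_le hC (lipschitzWith_asymptoticRadius hu).continuous fun _ hd =>
    exists_forall_dist_le_of_asymptoticRadius_lt_add hu hconv
      (fun _ hx => hm.1 (mem_image_of_mem _ hx)) hd

end UniformConvex

theorem IsCMapping.asymptoticRadius_orbit_apply_le {X : Type*} [NormedAddCommGroup X]
    {T : X → X} {C : Set X} (hc : IsCMapping T C) (hT : MapsTo T C C) {x₀ : X} (hx₀ : x₀ ∈ C)
    (hu : Bornology.IsBounded (range fun n => T^[n] x₀)) {z : X} (hz : z ∈ C) :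
    asymptoticRadius (fun n => T^[n] x₀) (T z) ≤ asymptoticRadius (fun n => T^[n] x₀) z := by
  obtain ⟨a, c, ⟨ha, -⟩, -, hc0, habc, hcmap⟩ := hc
  set u := fun n => T^[n] x₀
  set r := asymptoticRadius u
  obtain rfl : a = 1 - 2 * c := by linarith
  suffices hr : r (T z) ≤ (1 - 2 * c) * r z + c * (r (T z) + r z) from
    le_of_mul_le_mul_left (a := 1 - c) (by linarith) (by linarith)
  calc r (T z) = asymptoticRadius (fun n => u (n + 1)) (T z) := by rw [asymptoticRadius_nat_add]
    _ ≤ _ := asymptoticRadius_le_of_forall_eventually_le_add fun ε hε => ?_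
  have hlt (v : X) : ∀ᶠ n in atTop, ‖u n - v‖ < r v + ε :=
    eventually_norm_sub_lt_of_asymptoticRadius_lt hu (lt_add_of_pos_right _ hε)
  filter_upwards [hlt z, hlt (T z), (tendsto_add_atTop_nat 1).eventually (hlt z)] with n h₁ h₂ h₃
  have hsucc : u (n + 1) = T (u n) := Function.iterate_succ_apply' T n x₀
  calc ‖u (n + 1) - T z‖ = ‖T z - T (u n)‖ := by rw [hsucc, norm_sub_rev]
    _ ≤ (1 - 2 * c) * ‖z - u n‖ + c * (‖T z - u n‖ + ‖T (u n) - z‖) :=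
        hcmap z hz (u n) (hT.iterate n hx₀)
    _ ≤ (1 - 2 * c) * (r z + ε) + c * ((r (T z) + ε) + (r z + ε)) := by
        rw [norm_sub_rev z, norm_sub_rev (T z), ← hsucc]
        gcongr
    _ = (1 - 2 * c) * r z + c * (r (T z) + r z) + ε := by ring

/-- A (c)-mapping of a nonempty closed convex subset of a uniformly convex
real Banach space into itself having a bounded orbit has a fixed point. -/
theorem c_mapping_fixed_point_of_bounded_orbit
    {X : Type*} [NormedAddCommGroup X] [NormedSpace ℝ X] [CompleteSpace X]
    [UniformConvexSpace X]
    (C : Set X) (hne : C.Nonempty) (hclosed : IsClosed C) (hconv : Convex ℝ C)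
    (T : X → X) (hT : Set.MapsTo T C C) (hc : IsCMapping T C)
    (x₀ : X) (hx₀ : x₀ ∈ C)
    (horbit : Bornology.IsBounded (Set.range fun n : ℕ => T^[n] x₀)) :
    ∃ x ∈ C, T x = x := by
  have hbdd : BddBelow (asymptoticRadius (fun n => T^[n] x₀) '' C) :=
    ⟨0, forall_mem_image.2 fun v _ => asymptoticRadius_nonneg horbit v⟩
  obtain ⟨z, ⟨hzC, hz⟩, hunique⟩ :=
    existsUnique_asymptoticRadius_eq_of_isGLB horbit hclosed hconv (isGLB_csInf (hne.image _) hbdd)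
  have hTz := hc.asymptoticRadius_orbit_apply_le hT hx₀ horbit hzC
  exact ⟨z, hzC, hunique (T z)
    ⟨hT hzC, le_antisymm (hz ▸ hTz) (csInf_le hbdd (mem_image_of_mem _ (hT hzC)))⟩⟩
end

section
/- Let X be a uniformly convex real Banach space, let C be a nonempty closed convex subset of X with C = −C, and let T : C → C be an odd (c)-mapping (T(−x) = −Tx for all x ∈ C). Assume: (i) there exists x₀ ∈ C such that the orbit O(x₀) = {Tⁿx₀ : n ≥ 0} is bounded; (ii) for every integer i ≥ 1 and all x, y ∈ C, the sequence n ↦ ‖T^{n+i}x − Tⁿy‖ is decreasing. Then the Picard sequence (Tⁿx₀)ₙ converges in norm to a fixed point of T. -/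
/-! Put `xₙ = Tⁿ(T x₀)`; the shift makes `‖xₙ‖ = ‖T^{n+1} x₀ - Tⁿ 0‖` decrease from `n = 0`.
By oddness and `T 0 = 0`, the monotonicity hypothesis says that `‖xₙ‖` decreases to some `r`
and that each `‖x_{n+i} + xₙ‖` decreases to some `sᵢ ≤ 2r`, with `s₀ = 2r`.
The (c)-inequality at the pair `(x_{n+i+1}, -xₙ)` passes to the limit as
`2 s_{i+1} ≤ s_{i+2} + sᵢ`, and at `(xₙ, -xₙ)` as `s₀ ≤ s₁`; a convex sequence that starts
nondecreasing and never exceeds its first term is constant, so `‖xₘ + xₙ‖ ≥ 2r` for all `m, n`.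
By uniform convexity, vectors of norm close to `r` whose sum has norm close to `2r` are close to
each other, so `(xₙ)` is Cauchy. Its limit `z` is fixed, since the (c)-inequality at `(xₙ, z)`
gives `‖z - T z‖ ≤ c ‖z - T z‖` in the limit, and `c < 1`. -/

open Filter Topology Set Function

theorem norm_add_self_eq_two_mul {E : Type*} [SeminormedAddCommGroup E] [NormedSpace ℝ E]
    (x : E) : ‖x + x‖ = 2 * ‖x‖ := by
  rw [← two_smul ℝ, norm_smul, Real.norm_two]

section UniformConvex

variable {E ι : Type*} [SeminormedAddCommGroup E] [NormedSpace ℝ E] [UniformConvexSpace E]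
  {l : Filter ι} {u v : ι → E}

theorem tendsto_norm_sub_of_norm_le_one_of_tendsto_norm_add (hu : ∀ᶠ i in l, ‖u i‖ ≤ 1)
    (hv : ∀ᶠ i in l, ‖v i‖ ≤ 1) (huv : Tendsto (fun i => ‖u i + v i‖) l (𝓝 2)) :
    Tendsto (fun i => ‖u i - v i‖) l (𝓝 0) := by
  refine tendsto_order.2 ⟨fun b hb => .of_forall fun i => hb.trans_le (norm_nonneg _),
    fun ε hε => ?_⟩
  obtain ⟨δ, hδ, H⟩ := exists_forall_closed_ball_dist_add_le_two_sub E hε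
  filter_upwards [hu, hv, huv.eventually (lt_mem_nhds (sub_lt_self 2 hδ))] with i hui hvi hlt
  by_contra! hε
  exact (H hui hvi hε).not_gt hlt

theorem tendsto_norm_sub_of_tendsto_norm_add {r : ℝ} (hr : 0 < r)
    (hu : Tendsto (fun i => ‖u i‖) l (𝓝 r)) (hv : Tendsto (fun i => ‖v i‖) l (𝓝 r))
    (huv : Tendsto (fun i => ‖u i + v i‖) l (𝓝 (2 * r))) :
    Tendsto (fun i => ‖u i - v i‖) l (𝓝 0) := by
  -- `ρ i ≥ r > 0` dominates both norms and tends to `r`: rescaling by it reduces to the unit ball.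
  set ρ : ι → ℝ := fun i => max (max ‖u i‖ ‖v i‖) r
  have hρ_pos : ∀ i, 0 < ρ i := fun i => hr.trans_le (le_max_right _ _)
  have hρ : Tendsto ρ l (𝓝 r) := by simpa [ρ] using (hu.max hv).max (tendsto_const_nhds (x := r))
  have hle : ∀ i, ‖(ρ i)⁻¹ • u i‖ ≤ 1 ∧ ‖(ρ i)⁻¹ • v i‖ ≤ 1 := fun i => by
    simp only [norm_smul_of_nonneg (inv_nonneg.2 (hρ_pos i).le), inv_mul_le_one₀ (hρ_pos i)]
    exact ⟨(le_max_left _ _).trans (le_max_left _ _), (le_max_right _ _).trans (le_max_left _ _)⟩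
  have hscaled := tendsto_norm_sub_of_norm_le_one_of_tendsto_norm_add (l := l)
    (.of_forall fun i => (hle i).1) (.of_forall fun i => (hle i).2) (by
      simp only [← smul_add, norm_smul_of_nonneg (inv_nonneg.2 (hρ_pos _).le)]
      convert (hρ.inv₀ hr.ne').mul huv using 2
      field_simp)
  convert hρ.mul hscaled using 2 with i
  · rw [← smul_sub, norm_smul_of_nonneg (inv_nonneg.2 (hρ_pos i).le),
      mul_inv_cancel_left₀ (hρ_pos i).ne']
  · simp

theorem cauchySeq_of_tendsto_norm_of_two_mul_le_norm_add {y : ℕ → E} {r : ℝ}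
    (hy : Tendsto (fun n => ‖y n‖) atTop (𝓝 r)) (hadd : ∀ m n, 2 * r ≤ ‖y m + y n‖) :
    CauchySeq y := by
  rcases (ge_of_tendsto' hy fun n => norm_nonneg (y n)).eq_or_lt with rfl | hr
  · exact (tendsto_zero_iff_norm_tendsto_zero.2 hy).cauchySeq
  rw [cauchySeq_iff_tendsto_dist_atTop_0]
  simp only [dist_eq_norm]
  have hfst : Tendsto (fun p : ℕ × ℕ => ‖y p.1‖) atTop (𝓝 r) :=
    hy.comp (prod_atTop_atTop_eq (α := ℕ) (β := ℕ) ▸ tendsto_fst)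
  have hsnd : Tendsto (fun p : ℕ × ℕ => ‖y p.2‖) atTop (𝓝 r) :=
    hy.comp (prod_atTop_atTop_eq (α := ℕ) (β := ℕ) ▸ tendsto_snd)
  refine tendsto_norm_sub_of_tendsto_norm_add hr hfst hsnd ?_
  refine tendsto_of_tendsto_of_tendsto_of_le_of_le tendsto_const_nhds ?_
    (fun p => hadd p.1 p.2) (fun p => norm_add_le _ _)
  simpa [two_mul] using hfst.add hsnd

end UniformConvex

theorem eq_head_of_two_mul_le_add_of_le_head {s : ℕ → ℝ} (h01 : s 0 ≤ s 1)
    (hconv : ∀ i, 2 * s (i + 1) ≤ s (i + 2) + s i) (hle : ∀ i, s i ≤ s 0) (i : ℕ) :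
    s i = s 0 := by
  suffices ∀ i, s i = s 0 ∧ s 0 ≤ s (i + 1) from (this i).1
  intro i
  induction i with
  | zero => exact ⟨rfl, h01⟩
  | succ i ih =>
    have hi1 : s (i + 1) = s 0 := le_antisymm (hle _) ih.2
    exact ⟨hi1, by linarith [hconv i, ih.1]⟩

section SymmetricSums

variable {E : Type*} [SeminormedAddCommGroup E] [NormedSpace ℝ E] {x : ℕ → E} {a c r : ℝ}

theorem two_mul_le_norm_add_of_antitone (hac : a + 2 * c = 1) (hc : 0 < c)
    (hr : Tendsto (fun n => ‖x n‖) atTop (𝓝 r))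
    (hanti : ∀ i, Antitone fun n => ‖x (n + i) + x n‖)
    (hrec : ∀ p q, ‖x (p + 1) + x (q + 1)‖ ≤
      a * ‖x p + x q‖ + c * (‖x (p + 1) + x q‖ + ‖x p + x (q + 1)‖)) (m n : ℕ) :
    2 * r ≤ ‖x m + x n‖ := by
  obtain rfl : a = 1 - 2 * c := by linarith
  have hlim : ∀ i, ∃ s, Tendsto (fun n => ‖x (n + i) + x n‖) atTop (𝓝 s) := fun i =>
    ⟨_, tendsto_atTop_ciInf (hanti i) ⟨0, by rintro _ ⟨n, rfl⟩; positivity⟩⟩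
  choose s hs using hlim
  have hs_shift : ∀ i, Tendsto (fun n => ‖x (n + i + 1) + x (n + 1)‖) atTop (𝓝 (s i)) :=
    fun i => ((tendsto_add_atTop_iff_nat 1).2 (hs i)).congr fun n => by rw [add_right_comm]
  have hs0 : s 0 = 2 * r := by
    refine tendsto_nhds_unique (hs 0) ?_
    simpa only [add_zero, norm_add_self_eq_two_mul] using hr.const_mul 2
  have hs_le : ∀ i, s i ≤ 2 * r := fun i =>
    le_of_tendsto_of_tendsto' (hs i) (by simpa only [two_mul] using
      ((tendsto_add_atTop_iff_nat i).2 hr).add hr) fun n => norm_add_le _ _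
  have h01 : s 0 ≤ s 1 := by
    have := le_of_tendsto_of_tendsto' (hs_shift 0)
      ((hs 0).const_mul (1 - 2 * c) |>.add
        (((hs 1).add ((hs 1).congr fun n => by rw [add_comm])).const_mul c))
      fun n => hrec n n
    exact le_of_mul_le_mul_left (by linarith) hc
  have hconv : ∀ i, 2 * s (i + 1) ≤ s (i + 2) + s i := fun i => by
    have := le_of_tendsto_of_tendsto' (hs_shift (i + 1))
      ((hs (i + 1)).const_mul (1 - 2 * c) |>.add (((hs (i + 2)).add (hs_shift i)).const_mul c))
      fun n => hrec (n + (i + 1)) n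
    exact le_of_mul_le_mul_left (by linarith) hc
  have hs_eq : ∀ i, s i = 2 * r := fun i =>
    hs0 ▸ eq_head_of_two_mul_le_add_of_le_head h01 hconv (fun i => hs0 ▸ hs_le i) i
  wlog hnm : n ≤ m generalizing m n
  · simpa only [add_comm] using this n m (le_of_not_ge hnm)
  obtain ⟨i, rfl⟩ := Nat.exists_eq_add_of_le hnm
  simpa only [hs_eq, add_comm n i] using (hanti i).le_of_tendsto (hs i) n

end SymmetricSums

theorem Convex.zero_mem_of_eq_neg {X : Type*} [AddCommGroup X] [Module ℝ X] {C : Set X}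
    (hne : C.Nonempty) (hconv : Convex ℝ C) (hsymm : C = -C) : (0 : X) ∈ C := by
  obtain ⟨x, hx⟩ := hne
  have hx' : -x ∈ C := by rw [hsymm] at hx; exact hx
  simpa using hconv hx hx' (by norm_num : (0 : ℝ) ≤ 1 / 2) (by norm_num : (0 : ℝ) ≤ 1 / 2)
    (by norm_num)

theorem iterate_neg_of_forall_mem {α : Type*} [Neg α] {T : α → α} {C : Set α}
    (hT : MapsTo T C C) (hodd : ∀ x ∈ C, T (-x) = -T x) {x : α} (hx : x ∈ C) (n : ℕ) :
    T^[n] (-x) = -T^[n] x := by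
  induction n with
  | zero => rfl
  | succ n ih => rw [iterate_succ_apply', iterate_succ_apply', ih, hodd _ (hT.iterate n hx)]

namespace IsCMapping

variable {X : Type*} [NormedAddCommGroup X] {C : Set X} {T : X → X}

theorem cauchySeq_iterate [NormedSpace ℝ X] [UniformConvexSpace X] (hc : IsCMapping T C)
    (hT : MapsTo T C C) (hneg : ∀ x ∈ C, -x ∈ C) (hodd : ∀ x ∈ C, T (-x) = -T x)
    {x : X} (hx : x ∈ C) (hnorm : Antitone fun n => ‖T^[n] x‖)
    (hanti : ∀ i, 1 ≤ i → Antitone fun n => ‖T^[n + i] x + T^[n] x‖) :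
    CauchySeq fun n => T^[n] x := by
  obtain ⟨a, c, -, -, hc0, hac, hineq⟩ := hc
  obtain ⟨r, hr⟩ : ∃ r, Tendsto (fun n => ‖T^[n] x‖) atTop (𝓝 r) :=
    ⟨_, tendsto_atTop_ciInf hnorm ⟨0, by rintro _ ⟨n, rfl⟩; positivity⟩⟩
  refine cauchySeq_of_tendsto_norm_of_two_mul_le_norm_add hr
    (two_mul_le_norm_add_of_antitone hac hc0 hr (fun i => ?_) fun p q => ?_)
  · rcases i.eq_zero_or_pos with rfl | hi
    · intro m n hmn
      simp only [add_zero, norm_add_self_eq_two_mul]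
      exact mul_le_mul_of_nonneg_left (hnorm hmn) zero_le_two
    · exact hanti i hi
  · have h := hineq _ (hT.iterate p hx) _ (hneg _ (hT.iterate q hx))
    rwa [hodd _ (hT.iterate q hx), neg_sub_left, norm_neg, sub_neg_eq_add, sub_neg_eq_add,
      sub_neg_eq_add, ← iterate_succ_apply' T p, ← iterate_succ_apply' T q] at h

theorem isFixedPt_of_tendsto_iterate (hc : IsCMapping T C) (hT : MapsTo T C C)
    {x z : X} (hx : x ∈ C) (hz : z ∈ C) (h : Tendsto (fun n => T^[n] x) atTop (𝓝 z)) :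
    IsFixedPt T z := by
  obtain ⟨a, c, ⟨ha, -⟩, -, -, hac, hineq⟩ := hc
  have hle : ‖z - T z‖ ≤ a * ‖z - z‖ + c * (‖z - z‖ + ‖T z - z‖) := by
    have h₁ := (tendsto_add_atTop_iff_nat 1).2 h
    refine le_of_tendsto_of_tendsto' (h₁.sub_const (T z)).norm
      (((h.sub_const z).norm.const_mul a).add
        (((h₁.sub_const z).norm.add (h.const_sub (T z)).norm).const_mul c)) fun n => ?_
    rw [iterate_succ_apply']
    exact hineq _ (hT.iterate n hx) _ hz
  rw [sub_self, norm_zero, mul_zero, zero_add, zero_add, norm_sub_rev] at hle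
  have hz : ‖T z - z‖ = 0 := le_antisymm (by nlinarith [norm_nonneg (T z - z)]) (norm_nonneg _)
  exact sub_eq_zero.1 (norm_eq_zero.1 hz)

end IsCMapping

theorem picard_converges_to_fixed_point_general
    {X : Type*} [NormedAddCommGroup X] [NormedSpace ℝ X] [CompleteSpace X]
    [UniformConvexSpace X]
    (C : Set X) (hne : C.Nonempty) (hclosed : IsClosed C) (hconv : Convex ℝ C)
    (hsymm : C = -C)
    (T : X → X) (hT : Set.MapsTo T C C) (hc : IsCMapping T C)
    (hodd : ∀ x ∈ C, T (-x) = -T x)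
    (x₀ : X) (hx₀ : x₀ ∈ C)
    (hmono : ∀ i : ℕ, 1 ≤ i → ∀ x ∈ C, ∀ y ∈ C,
      Antitone fun n : ℕ => ‖T^[n + i] x - T^[n] y‖) :
    ∃ z ∈ C, T z = z ∧
      Filter.Tendsto (fun n : ℕ => T^[n] x₀) Filter.atTop (nhds z) := by
  have hneg : ∀ x ∈ C, -x ∈ C := fun x hx => by rw [hsymm] at hx; exact hx
  have h0 : (0 : X) ∈ C := hconv.zero_mem_of_eq_neg hne hsymm
  have hT0 : T 0 = 0 := by
    have := IsAddTorsionFree.of_isTorsionFree ℝ X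
    simpa only [neg_zero, self_eq_neg] using hodd 0 h0
  have hx₁ : T x₀ ∈ C := hT hx₀
  have hnorm : Antitone fun n => ‖T^[n] (T x₀)‖ := by
    simpa only [← iterate_succ_apply, iterate_fixed hT0, sub_zero] using
      hmono 1 le_rfl x₀ hx₀ 0 h0
  have hanti : ∀ i, 1 ≤ i → Antitone fun n => ‖T^[n + i] (T x₀) + T^[n] (T x₀)‖ := fun i hi => by
    simpa only [iterate_neg_of_forall_mem hT hodd hx₁, sub_neg_eq_add] using
      hmono i hi _ hx₁ _ (hneg _ hx₁)
  obtain ⟨z, hz⟩ :=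
    cauchySeq_tendsto_of_complete (hc.cauchySeq_iterate hT hneg hodd hx₁ hnorm hanti)
  have hz₀ : Tendsto (fun n => T^[n] x₀) atTop (𝓝 z) :=
    (tendsto_add_atTop_iff_nat 1).1 (by simpa only [← iterate_succ_apply] using hz)
  have hzC : z ∈ C := hclosed.mem_of_tendsto hz₀ (.of_forall fun n => hT.iterate n hx₀)
  exact ⟨z, hzC, hc.isFixedPt_of_tendsto_iterate hT hx₀ hzC hz₀, hz₀⟩

/-- Under uniform convexity, symmetry of `C`, oddness of the (c)-mapping
`T`, boundedness of an orbit, and the monotonicity hypothesis (ii), the Picard sequence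
from `x₀` converges in norm to a fixed point of `T`. -/
theorem picard_converges_to_fixed_point
    {X : Type*} [NormedAddCommGroup X] [NormedSpace ℝ X] [CompleteSpace X]
    [UniformConvexSpace X]
    (C : Set X) (hne : C.Nonempty) (hclosed : IsClosed C) (hconv : Convex ℝ C)
    (hsymm : C = -C)
    (T : X → X) (hT : Set.MapsTo T C C) (hc : IsCMapping T C)
    (hodd : ∀ x ∈ C, T (-x) = -T x)
    (x₀ : X) (hx₀ : x₀ ∈ C)
    (horbit : Bornology.IsBounded (Set.range fun n : ℕ => T^[n] x₀))
    (hmono : ∀ i : ℕ, 1 ≤ i → ∀ x ∈ C, ∀ y ∈ C,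
      Antitone fun n : ℕ => ‖T^[n + i] x - T^[n] y‖) :
    ∃ z ∈ C, T z = z ∧
      Filter.Tendsto (fun n : ℕ => T^[n] x₀) Filter.atTop (nhds z) :=
  picard_converges_to_fixed_point_general C hne hclosed hconv hsymm T hT hc hodd x₀ hx₀ hmono
end

section
/- Define T : [0,3] → [0,3] by Tx = 0 if x ∈ [0,3) and Tx = 1 if x = 3. Then T is a (c)-mapping with c = 1/2 (and a = 0): |Tx − Ty| ≤ (1/2)(|Tx − y| + |Ty − x|) for all x, y ∈ [0,3], and also a (c)-mapping with c = 1/3 (and a = 1/3): |Tx − Ty| ≤ (1/3)(|x − y| + |Tx − y| + |Ty − x|) for all x, y ∈ [0,3]. -/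
/-- The map `T : [0,3] → [0,3]`, `Tx = 0` for `x ∈ [0,3)` and `T3 = 1`,
is a (c)-mapping with `a = 0, c = 1/2` and also with `a = c = 1/3`. -/
theorem example_map_is_c_mapping
    (T : ℝ → ℝ) (hTdef : ∀ x, T x = if x = 3 then 1 else 0) :
    Set.MapsTo T (Set.Icc (0 : ℝ) 3) (Set.Icc (0 : ℝ) 3) ∧
    (∀ x ∈ Set.Icc (0 : ℝ) 3, ∀ y ∈ Set.Icc (0 : ℝ) 3,
      |T x - T y| ≤ (1 / 2) * (|T x - y| + |T y - x|)) ∧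
    (∀ x ∈ Set.Icc (0 : ℝ) 3, ∀ y ∈ Set.Icc (0 : ℝ) 3,
      |T x - T y| ≤ (1 / 3) * (|x - y| + |T x - y| + |T y - x|)) := by
  refine ⟨?_, ?_, ?_⟩
  · intro x _
    rw [hTdef x]
    split_ifs <;> norm_num
  · rintro x ⟨hx0, hx3⟩ y ⟨hy0, hy3⟩
    rw [hTdef x, hTdef y]
    split_ifs with h1 h2 h2
    · subst h1; subst h2; norm_num
    · subst h1; norm_num
      linarith [abs_nonneg (1 - y)]
    · subst h2; norm_num
      linarith [abs_nonneg (1 - x)]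
    · norm_num
      positivity
  · rintro x ⟨hx0, hx3⟩ y ⟨hy0, hy3⟩
    rw [hTdef x, hTdef y]
    split_ifs with h1 h2 h2
    · subst h1; subst h2; norm_num
    · subst h1; norm_num
      linarith [le_abs_self (3 - y), neg_abs_le (1 - y)]
    · subst h2; norm_num
      linarith [neg_abs_le (x - 3), neg_abs_le (1 - x)]
    · norm_num
      positivity
end

section
/- Let X be a uniformly convex real Banach space, C a nonempty closed convex subset of X, and T : C → C a (c)-mapping. Then 0 ∈ R(I − T) (i.e., T has a fixed point in C) if and only if there exists x₀ ∈ C whose orbit O(x₀) = {Tⁿx₀ : n ≥ 0} is bounded. -/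
open Filter

private lemma le_add_all' {a b : ℝ} (h : ∀ ε : ℝ, 0 < ε → a ≤ b + ε) : a ≤ b := by
  by_contra hab
  push_neg at hab
  have := h ((a - b) / 2) (by linarith)
  linarith

/-- Scaled uniform convexity: a single modulus works for all radii below `R`. -/
private lemma myUC {X : Type*} [NormedAddCommGroup X] [NormedSpace ℝ X] [UniformConvexSpace X]
    {ε R : ℝ} (hε : 0 < ε) (hR : 0 < R) :
    ∃ δ > 0, ∀ R' : ℝ, 0 < R' → R' ≤ R → ∀ u v : X, ‖u‖ ≤ R' → ‖v‖ ≤ R' →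
      ε ≤ ‖u - v‖ → ‖u + v‖ ≤ R' * (2 - δ) := by
  obtain ⟨δ, hδ, H⟩ := exists_forall_closed_ball_dist_add_le_two_sub X (div_pos hε hR)
  refine ⟨δ, hδ, fun R' hR' hR'R u v hu hv huv => ?_⟩
  have hinv : (0:ℝ) < R'⁻¹ := inv_pos.mpr hR'
  have h1 : ‖R'⁻¹ • u‖ ≤ 1 := by
    rw [norm_smul, Real.norm_eq_abs, abs_of_pos hinv]
    calc R'⁻¹ * ‖u‖ ≤ R'⁻¹ * R' := by gcongr
      _ = 1 := inv_mul_cancel₀ hR'.ne'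
  have h2 : ‖R'⁻¹ • v‖ ≤ 1 := by
    rw [norm_smul, Real.norm_eq_abs, abs_of_pos hinv]
    calc R'⁻¹ * ‖v‖ ≤ R'⁻¹ * R' := by gcongr
      _ = 1 := inv_mul_cancel₀ hR'.ne'
  have h3 : ε / R ≤ ‖R'⁻¹ • u - R'⁻¹ • v‖ := by
    rw [← smul_sub, norm_smul, Real.norm_eq_abs, abs_of_pos hinv]
    calc ε / R ≤ ε / R' := by gcongr
      _ ≤ ‖u - v‖ / R' := by gcongr
      _ = R'⁻¹ * ‖u - v‖ := by rw [div_eq_inv_mul]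
  have := H h1 h2 h3
  rw [← smul_add, norm_smul, Real.norm_eq_abs, abs_of_pos hinv] at this
  calc ‖u + v‖ = R' * (R'⁻¹ * ‖u + v‖) := by
        rw [← mul_assoc, mul_inv_cancel₀ hR'.ne', one_mul]
    _ ≤ R' * (2 - δ) := by gcongr

private lemma tri_aux {X : Type*} [NormedAddCommGroup X] (a b c : X) :
    ‖a - b‖ ≤ ‖a - c‖ + ‖b - c‖ := by
  have h : a - b = (a - c) - (b - c) := by abel
  rw [h]
  exact norm_sub_le _ _

private theorem aux_fixed {X : Type*} [NormedAddCommGroup X] [NormedSpace ℝ X]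
    [CompleteSpace X] [UniformConvexSpace X]
    {C : Set X} (hclosed : IsClosed C) (hconv : Convex ℝ C)
    {T : X → X} (hT : Set.MapsTo T C C)
    {a c : ℝ} (ha0 : 0 ≤ a) (hc0 : 0 < c) (habc : a + 2 * c = 1)
    (hineq : ∀ x ∈ C, ∀ y ∈ C, ‖T x - T y‖ ≤ a * ‖x - y‖ + c * (‖T x - y‖ + ‖T y - x‖))
    {x : ℕ → X} (hxC : ∀ n, x n ∈ C) (hxs : ∀ n, x (n + 1) = T (x n))
    {M : ℝ} (hM : ∀ n, ‖x n‖ ≤ M) :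
    ∃ w ∈ C, T w = w := by
  classical
  set φ : X → ℝ := fun p => limsup (fun n => ‖p - x n‖) atTop with hφdef
  have hA : ∀ p : X, IsBoundedUnder (· ≤ ·) atTop (fun n => ‖p - x n‖) := fun p =>
    isBoundedUnder_of ⟨‖p‖ + M, fun n => (norm_sub_le _ _).trans (by linarith [hM n])⟩
  have hCo : ∀ p : X, IsCoboundedUnder (· ≤ ·) atTop (fun n => ‖p - x n‖) := fun p =>
    (isBoundedUnder_of ⟨0, fun n => norm_nonneg _⟩ :
      IsBoundedUnder (· ≥ ·) atTop (fun n => ‖p - x n‖)).isCoboundedUnder_le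
  have hle : ∀ p : X, ∀ b : ℝ, (∀ᶠ n in atTop, ‖p - x n‖ ≤ b) → φ p ≤ b := fun p b h =>
    limsup_le_of_le (hCo p) h
  have hev : ∀ p : X, ∀ ε : ℝ, 0 < ε → ∀ᶠ n in atTop, ‖p - x n‖ < φ p + ε := fun p ε hε =>
    eventually_lt_of_limsup_lt (lt_add_of_pos_right (φ p) hε) (hA p)
  have hφ0 : ∀ p : X, 0 ≤ φ p := fun p =>
    le_limsup_of_frequently_le (Frequently.of_forall fun n => norm_nonneg _) (hA p)
  have hCne : C.Nonempty := ⟨x 0, hxC 0⟩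
  set r : ℝ := sInf (φ '' C) with hrdef
  have hbb : BddBelow (φ '' C) := ⟨0, by rintro b ⟨p, _, rfl⟩; exact hφ0 p⟩
  have hrle : ∀ p ∈ C, r ≤ φ p := fun p hp => csInf_le hbb ⟨p, hp, rfl⟩
  have hr0 : 0 ≤ r := le_csInf (hCne.image φ) (by rintro b ⟨p, _, rfl⟩; exact hφ0 p)
  have hmin : ∀ k : ℕ, ∃ p ∈ C, φ p < r + 1 / (k + 1) := by
    intro k
    have hpos : (0:ℝ) < 1 / (k + 1) := by positivity
    obtain ⟨b, hbS, hb⟩ := exists_lt_of_csInf_lt (hCne.image φ)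
      (show sInf (φ '' C) < r + 1 / (k + 1) by rw [← hrdef]; linarith)
    obtain ⟨p, hp, rfl⟩ := hbS
    exact ⟨p, hp, hb⟩
  choose z hzC hzφ using hmin
  -- the key uniform-convexity estimate
  have key : ∀ ε : ℝ, 0 < ε → 0 < r → ∃ t : ℝ, 0 < t ∧
      ∀ p q : X, p ∈ C → q ∈ C → φ p < r + t → φ q < r + t → ‖p - q‖ < ε := by
    intro ε hε hrpos
    obtain ⟨δ, hδ, H⟩ := myUC (X := X) hε (show (0:ℝ) < r + 1 by linarith)
    set t' : ℝ := min 1 (r * δ / 4) with ht'def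
    have ht'pos : 0 < t' := lt_min one_pos (by positivity)
    have ht'1 : t' ≤ 1 := min_le_left _ _
    have ht'2 : t' ≤ r * δ / 4 := min_le_right _ _
    refine ⟨t' / 2, by positivity, fun p q hpC hqC hp hq => ?_⟩
    by_contra hcon
    push_neg at hcon
    have hm : (1/2 : ℝ) • p + (1/2 : ℝ) • q ∈ C :=
      hconv hpC hqC (by norm_num) (by norm_num) (by norm_num)
    have hbound : ∀ᶠ n in atTop,
        ‖((1/2 : ℝ) • p + (1/2 : ℝ) • q) - x n‖ ≤ (r + t') * (2 - δ) / 2 := by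
      filter_upwards [hev p (t' / 2) (by positivity), hev q (t' / 2) (by positivity)]
        with n h1 h2
      have hu : ‖p - x n‖ ≤ r + t' := by linarith
      have hv : ‖q - x n‖ ≤ r + t' := by linarith
      have huv : ε ≤ ‖(p - x n) - (q - x n)‖ := by
        have he : (p - x n) - (q - x n) = p - q := by abel
        rw [he]; exact hcon
      have hH := H (r + t') (by linarith) (by linarith) _ _ hu hv huv
      have heq : ((1/2 : ℝ) • p + (1/2 : ℝ) • q) - x n
          = (1/2 : ℝ) • ((p - x n) + (q - x n)) := by
        module
      calc ‖((1/2 : ℝ) • p + (1/2 : ℝ) • q) - x n‖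
          = (1/2) * ‖(p - x n) + (q - x n)‖ := by
            rw [heq, norm_smul, Real.norm_eq_abs]; norm_num
        _ ≤ (1/2) * ((r + t') * (2 - δ)) := by linarith
        _ = (r + t') * (2 - δ) / 2 := by ring
    have h1 := hle _ _ hbound
    have h2 := hrle _ hm
    have hlt : (r + t') * (2 - δ) / 2 < r := by nlinarith [mul_nonneg ht'pos.le hδ.le]
    linarith
  -- the minimizing sequence is Cauchy
  have hcauchy : CauchySeq z := by
    rw [Metric.cauchySeq_iff]
    intro ε hε
    rcases lt_or_ge 0 r with hrpos | hrneg
    · obtain ⟨t, ht, hkey⟩ := key ε hε hrpos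
      obtain ⟨N, hN⟩ := exists_nat_one_div_lt ht
      refine ⟨N, fun m hm n hn => ?_⟩
      rw [dist_eq_norm]
      apply hkey _ _ (hzC m) (hzC n)
      · calc φ (z m) < r + 1 / (m + 1) := hzφ m
          _ ≤ r + 1 / (N + 1) := by gcongr
          _ < r + t := by linarith
      · calc φ (z n) < r + 1 / (n + 1) := hzφ n
          _ ≤ r + 1 / (N + 1) := by gcongr
          _ < r + t := by linarith
    · obtain ⟨N, hN⟩ := exists_nat_one_div_lt (show (0:ℝ) < ε/4 by linarith)
      refine ⟨N, fun m hm n hn => ?_⟩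
      obtain ⟨j, h1, h2⟩ :=
        ((hev (z m) (ε/4) (by linarith)).and (hev (z n) (ε/4) (by linarith))).exists
      have hmN : (1:ℝ) / (m + 1) ≤ 1 / (N + 1) := by gcongr
      have hnN : (1:ℝ) / (n + 1) ≤ 1 / (N + 1) := by gcongr
      have h3 := tri_aux (z m) (z n) (x j)
      rw [dist_eq_norm]
      have h4 := hzφ m
      have h5 := hzφ n
      linarith
  obtain ⟨w, hw⟩ := cauchySeq_tendsto_of_complete hcauchy
  have hwC : w ∈ C := hclosed.mem_of_tendsto hw (Eventually.of_forall hzC)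
  have hφw : φ w ≤ r := by
    apply le_add_all'
    intro ε hε
    obtain ⟨N₁, hN₁⟩ := Metric.tendsto_atTop.mp hw (ε/3) (by linarith)
    obtain ⟨N₂, hN₂⟩ := exists_nat_one_div_lt (show (0:ℝ) < ε/3 by linarith)
    set k := max N₁ N₂ with hkdef
    have h1 : dist (z k) w < ε/3 := hN₁ k (le_max_left _ _)
    have h2 : (1:ℝ) / (k + 1) < ε/3 := by
      refine lt_of_le_of_lt ?_ hN₂
      gcongr
      exact le_max_right N₁ N₂
    apply hle
    filter_upwards [hev (z k) (ε/3) (by linarith)] with n h3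
    have h4 := tri_aux w (x n) (z k)
    rw [norm_sub_rev (x n) (z k)] at h4
    have h5 : ‖w - z k‖ = dist (z k) w := by rw [dist_eq_norm, norm_sub_rev]
    have h6 := hzφ k
    rw [h5] at h4
    linarith
  have hTwC : T w ∈ C := hT hwC
  have hφTw : φ (T w) ≤ r := by
    have hfin : φ (T w) ≤ a * r + c * (φ (T w) + r) := by
      apply le_add_all'
      intro ε hε
      apply hle
      obtain ⟨N, hN⟩ := eventually_atTop.mp ((hev w ε hε).and (hev (T w) ε hε))
      rw [eventually_atTop]
      refine ⟨N + 1, fun n hn => ?_⟩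
      obtain ⟨m, rfl⟩ : ∃ m, n = m + 1 := ⟨n - 1, by omega⟩
      obtain ⟨h1, h2⟩ := hN m (by omega)
      have h3 : ‖w - x (m+1)‖ < φ w + ε := (hN (m+1) (by omega)).1
      have hTx : ‖T w - x (m+1)‖ ≤ a * ‖w - x m‖ + c * (‖T w - x m‖ + ‖x (m+1) - w‖) := by
        rw [hxs m]
        exact hineq w hwC (x m) (hxC m)
      have h4 : ‖x (m+1) - w‖ < φ w + ε := by rw [norm_sub_rev]; exact h3
      have hb1 : ‖w - x m‖ ≤ r + ε := by linarith
      have hb2 : ‖T w - x m‖ ≤ φ (T w) + ε := h2.le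
      have hb3 : ‖x (m+1) - w‖ ≤ r + ε := by linarith
      have e1 : a * ‖w - x m‖ ≤ a * (r + ε) := mul_le_mul_of_nonneg_left hb1 ha0
      have e2 : c * (‖T w - x m‖ + ‖x (m+1) - w‖) ≤ c * ((φ (T w) + ε) + (r + ε)) :=
        mul_le_mul_of_nonneg_left (add_le_add hb2 hb3) hc0.le
      have efin : a * (r + ε) + c * ((φ (T w) + ε) + (r + ε))
          = a * r + c * (φ (T w) + r) + ε := by linear_combination ε * habc
      linarith
    have har : a * r = r - 2 * (c * r) := by
      have ha' : a = 1 - 2 * c := by linarith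
      rw [ha']; ring
    by_contra hgt
    push_neg at hgt
    have hc2 : c ≤ 1/2 := by linarith
    have h6 : 0 < (1 - c) * (φ (T w) - r) := mul_pos (by linarith) (by linarith)
    nlinarith [hfin, har, h6]
  refine ⟨w, hwC, ?_⟩
  rcases lt_or_ge 0 r with hrpos | hrneg
  · by_contra hne'
    have hε : 0 < ‖T w - w‖ := norm_pos_iff.mpr (sub_ne_zero.mpr hne')
    obtain ⟨t, ht, hkey⟩ := key _ hε hrpos
    exact lt_irrefl _ (hkey (T w) w hTwC hwC (by linarith) (by linarith))
  · have hz0 : ∀ ε : ℝ, 0 < ε → ‖T w - w‖ ≤ 0 + ε := by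
      intro ε hε
      obtain ⟨n, h1, h2⟩ :=
        ((hev w (ε/2) (by linarith)).and (hev (T w) (ε/2) (by linarith))).exists
      have h3 := tri_aux (T w) w (x n)
      linarith
    have h7 : ‖T w - w‖ ≤ 0 := by simpa using le_add_all' hz0
    exact sub_eq_zero.mp (norm_le_zero_iff.mp h7)

/-- For a (c)-mapping on a nonempty closed convex subset of a uniformly
convex real Banach space, `0 ∈ R(I - T)` (i.e. `T` has a fixed point) iff some orbit
is bounded. -/
theorem zero_mem_range_iff_bounded_orbit
    {X : Type*} [NormedAddCommGroup X] [NormedSpace ℝ X] [CompleteSpace X]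
    [UniformConvexSpace X]
    (C : Set X) (hne : C.Nonempty) (hclosed : IsClosed C) (hconv : Convex ℝ C)
    (T : X → X) (hT : Set.MapsTo T C C) (hc : IsCMapping T C) :
    (0 ∈ {y : X | ∃ x ∈ C, y = x - T x}) ↔
      ∃ x₀ ∈ C, Bornology.IsBounded (Set.range fun n : ℕ => T^[n] x₀) := by
  constructor
  · rintro ⟨p, hpC, hp⟩
    have hfix : T p = p := by
      have : p - T p = 0 := hp.symm
      have := sub_eq_zero.mp this
      exact this.symm
    refine ⟨p, hpC, ?_⟩
    have hsub : (Set.range fun n : ℕ => T^[n] p) ⊆ {p} := by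
      rintro _ ⟨n, rfl⟩
      simp [Function.iterate_fixed hfix n]
    exact Bornology.IsBounded.subset (Bornology.isBounded_singleton) hsub
  · rintro ⟨x₀, hx₀, hbdd⟩
    obtain ⟨a, c, ha, hcI, hc0, habc, hineq⟩ := hc
    obtain ⟨M, hM⟩ := isBounded_iff_forall_norm_le.mp hbdd
    have hxC : ∀ n, T^[n] x₀ ∈ C := by
      intro n
      induction n with
      | zero => exact hx₀
      | succ n ih => rw [Function.iterate_succ_apply']; exact hT ih
    have hxs : ∀ n, T^[n+1] x₀ = T (T^[n] x₀) := fun n => Function.iterate_succ_apply' T n x₀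
    obtain ⟨w, hwC, hw⟩ := aux_fixed hclosed hconv hT ha.1 hc0 habc hineq hxC hxs
      (fun n => hM _ ⟨n, rfl⟩)
    exact ⟨w, hwC, by rw [hw]; simp⟩
end

section
/- Let C be a nonempty closed convex subset of a real Banach space X and let T : C → C be a Chatterjea mapping satisfying: (H1) for every x ∈ C and every integer k ≥ 2 the sequence n ↦ ‖T^{n+k}x − Tⁿx‖ is decreasing; (H2) there exist an integer k₀ ≥ 1 and a constant M such that ‖Tⁿx − Tⁿy‖ ≤ M‖x − y‖ for all n ≥ k₀ and all x, y ∈ C. Then 0 ∈ closure(R(I − T)) if and only if limₙ ‖Tⁿx‖/n = 0 for every x ∈ C (equivalently, 0 ∉ closure(R(I − T)) if and only if for every x ∈ C the limit limₙ ‖Tⁿx‖/n exists and is a positive number). -/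
open Filter

lemma chat_step_anti {X : Type*} [NormedAddCommGroup X]
    {C : Set X} {T : X → X} (hT : Set.MapsTo T C C)
    (hchat : ∀ x ∈ C, ∀ y ∈ C,
      ‖T x - T y‖ ≤ (1 / 2) * (‖T x - y‖ + ‖T y - x‖))
    {x : X} (hx : x ∈ C) :
    Antitone fun n : ℕ => ‖T^[n + 1] x - T^[n] x‖ := by
  apply antitone_nat_of_succ_le
  intro n
  have h1 := hchat (T^[n] x) (hT.iterate n hx) (T^[n+1] x) (hT.iterate (n+1) hx)
  rw [← Function.iterate_succ_apply' T n x, ← Function.iterate_succ_apply' T (n+1) x] at h1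
  simp only [sub_self, norm_zero] at h1
  have h2 : ‖T^[n+1+1] x - T^[n] x‖ ≤ ‖T^[n+1+1] x - T^[n+1] x‖ + ‖T^[n+1] x - T^[n] x‖ :=
    norm_sub_le_norm_sub_add_norm_sub _ _ _
  have h3 : ‖T^[n+1] x - T^[n+1+1] x‖ = ‖T^[n+1+1] x - T^[n+1] x‖ := norm_sub_rev _ _
  linarith

lemma chat_orbit_le {X : Type*} [NormedAddCommGroup X]
    {C : Set X} {T : X → X} (hT : Set.MapsTo T C C)
    (hchat : ∀ x ∈ C, ∀ y ∈ C,
      ‖T x - T y‖ ≤ (1 / 2) * (‖T x - y‖ + ‖T y - x‖))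
    {x : X} (hx : x ∈ C) (n : ℕ) :
    ‖T^[n] x - x‖ ≤ n * ‖T x - x‖ := by
  induction n with
  | zero => simp
  | succ n ih =>
    have hstep : ‖T^[n+1] x - T^[n] x‖ ≤ ‖T x - x‖ := by
      have := chat_step_anti hT hchat hx (Nat.zero_le n)
      simpa using this
    have := norm_sub_le_norm_sub_add_norm_sub (T^[n+1] x) (T^[n] x) x
    push_cast
    linarith

/-- For a Chatterjea mapping (a (c)-mapping with `c = 1/2`) on a nonempty
closed convex subset of a real Banach space satisfying (H1) and (H2),
`0 ∈ closure(R(I - T))` iff `‖Tⁿx‖/n → 0` for every `x ∈ C`. -/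
theorem zero_mem_closure_range_iff_sublinear_orbit
    {X : Type*} [NormedAddCommGroup X] [NormedSpace ℝ X] [CompleteSpace X]
    (C : Set X) (hne : C.Nonempty) (hclosed : IsClosed C) (hconv : Convex ℝ C)
    (T : X → X) (hT : Set.MapsTo T C C)
    (hchat : ∀ x ∈ C, ∀ y ∈ C,
      ‖T x - T y‖ ≤ (1 / 2) * (‖T x - y‖ + ‖T y - x‖))
    (hH1 : ∀ x ∈ C, ∀ k : ℕ, 2 ≤ k →
      Antitone fun n : ℕ => ‖T^[n + k] x - T^[n] x‖)
    (hH2 : ∃ k₀ : ℕ, 1 ≤ k₀ ∧ ∃ M : ℝ, ∀ n : ℕ, k₀ ≤ n →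
      ∀ x ∈ C, ∀ y ∈ C, ‖T^[n] x - T^[n] y‖ ≤ M * ‖x - y‖) :
    ((0 : X) ∈ closure {y : X | ∃ x ∈ C, y = x - T x}) ↔
      ∀ x ∈ C, Filter.Tendsto (fun n : ℕ => ‖T^[n] x‖ / n)
        Filter.atTop (nhds 0) := by
  constructor
  · -- forward direction: from `0 ∈ closure(R(I-T))` to sublinear orbits
    intro h0 x hx
    obtain ⟨k₀, hk₀, M, hM⟩ := hH2
    rw [Metric.tendsto_nhds]
    intro ε hε
    obtain ⟨y, hy, hyT⟩ : ∃ y ∈ C, ‖y - T y‖ < ε / 4 := by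
      rw [Metric.mem_closure_iff] at h0
      obtain ⟨z, hz, hd⟩ := h0 (ε/4) (by positivity)
      obtain ⟨y, hy, rfl⟩ := hz
      exact ⟨y, hy, by simpa [dist_eq_norm, norm_sub_rev] using hd⟩
    set K : ℝ := M * ‖x - y‖ + ‖y‖ with hK
    have hKlim : Tendsto (fun n : ℕ => K / n) atTop (nhds 0) :=
      tendsto_const_div_atTop_nhds_zero_nat K
    have hKev : ∀ᶠ n : ℕ in atTop, K / n < ε / 2 :=
      hKlim.eventually (gt_mem_nhds (by linarith))
    filter_upwards [hKev, eventually_ge_atTop k₀, eventually_ge_atTop 1] with n hKn hn1 hn2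
    have hnpos : (0:ℝ) < n := by exact_mod_cast hn2
    have hb1 : ‖T^[n] x - T^[n] y‖ ≤ M * ‖x - y‖ := hM n hn1 x hx y hy
    have hb2 : ‖T^[n] y - y‖ ≤ n * ‖T y - y‖ := chat_orbit_le hT hchat hy n
    have htri : ‖T^[n] x‖ ≤ ‖T^[n] x - T^[n] y‖ + ‖T^[n] y - y‖ + ‖y‖ := by
      have h : T^[n] x = (T^[n] x - T^[n] y) + (T^[n] y - y) + y := by abel
      calc ‖T^[n] x‖ = ‖(T^[n] x - T^[n] y) + (T^[n] y - y) + y‖ := by rw [← h]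
        _ ≤ ‖(T^[n] x - T^[n] y) + (T^[n] y - y)‖ + ‖y‖ := norm_add_le _ _
        _ ≤ ‖T^[n] x - T^[n] y‖ + ‖T^[n] y - y‖ + ‖y‖ := by
            have := norm_add_le (T^[n] x - T^[n] y) (T^[n] y - y); linarith
    have hTy : ‖T y - y‖ < ε / 4 := by rwa [norm_sub_rev]
    have hmain : ‖T^[n] x‖ / n ≤ K / n + ‖T y - y‖ := by
      rw [div_add' _ _ _ (ne_of_gt hnpos), div_le_div_iff_of_pos_right hnpos]
      calc ‖T^[n] x‖ ≤ M * ‖x - y‖ + n * ‖T y - y‖ + ‖y‖ := by linarith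
        _ = K + ‖T y - y‖ * n := by rw [hK]; ring
    have hnn : 0 ≤ ‖T^[n] x‖ / n := by positivity
    rw [Real.dist_eq, sub_zero, abs_of_nonneg hnn]
    linarith
  · -- backward direction: sublinear orbits force `0 ∈ closure(R(I-T))`
    intro h
    by_contra h0
    rw [Metric.mem_closure_iff] at h0
    push_neg at h0
    obtain ⟨ε, hε, hsep⟩ := h0
    obtain ⟨x, hx⟩ := hne
    have hεC : ∀ n : ℕ, ε ≤ ‖T^[n+1] x - T^[n] x‖ := by
      intro n
      have hmem : T^[n] x - T (T^[n] x) ∈ {y : X | ∃ x ∈ C, y = x - T x} :=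
        ⟨T^[n] x, hT.iterate n hx, rfl⟩
      have := hsep _ hmem
      rw [dist_zero_left, ← Function.iterate_succ_apply' T n x, norm_sub_rev] at this
      exact this
    set c : ℕ → ℕ → ℝ := fun k n => ‖T^[n + k] x - T^[n] x‖ with hc
    -- the Chatterjea recurrence
    have hRec : ∀ k n : ℕ, c (k+1) (n+1) ≤ (1/2) * (c k (n+1) + c (k+2) n) := by
      intro k n
      have h1 := hchat (T^[n] x) (hT.iterate n hx) (T^[n+k+1] x) (hT.iterate (n+k+1) hx)
      rw [← Function.iterate_succ_apply' T n x, ← Function.iterate_succ_apply' T (n+k+1) x] at h1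
      have e1 : ‖T^[n+1] x - T^[n+k+1+1] x‖ = c (k+1) (n+1) := by
        rw [hc]; rw [norm_sub_rev]; ring_nf
      have e2 : ‖T^[n+1] x - T^[n+k+1] x‖ = c k (n+1) := by
        rw [hc]; rw [norm_sub_rev]; ring_nf
      have e3 : ‖T^[n+k+1+1] x - T^[n] x‖ = c (k+2) n := by
        rw [hc]; ring_nf
      rw [e1, e2, e3] at h1
      exact h1
    -- each `c k` is antitone in `n`
    have hAnti : ∀ k : ℕ, Antitone (c k) := by
      intro k
      match k with
      | 0 => intro m n _; simp [hc]
      | 1 =>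
        apply antitone_nat_of_succ_le
        intro n
        have h1 := hRec 0 n
        have h0' : c 0 (n+1) = 0 := by simp [hc]
        have h2 : c 2 n ≤ c 1 (n+1) + c 1 n :=
          norm_sub_le_norm_sub_add_norm_sub (T^[n+2] x) (T^[n+1] x) (T^[n] x)
        rw [h0'] at h1
        linarith
      | (k+2) => exact hH1 x hx (k+2) (by omega)
    have hcnn : ∀ k n, 0 ≤ c k n := fun k n => norm_nonneg _
    set L : ℕ → ℝ := fun k => ⨅ n, c k n with hL
    have hBdd : ∀ k, BddBelow (Set.range (c k)) := by
      intro k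
      exact ⟨0, by rintro _ ⟨n, rfl⟩; exact hcnn k n⟩
    have hTend : ∀ k, Tendsto (c k) atTop (nhds (L k)) :=
      fun k => tendsto_atTop_ciInf (hAnti k) (hBdd k)
    have hLle : ∀ k n, L k ≤ c k n := fun k n => ciInf_le (hBdd k) n
    have hL0 : L 0 = 0 := by
      simp only [hL, hc]
      simp
    have hL1 : ε ≤ L 1 := le_ciInf fun n => hεC n
    -- the limits L k form a convex sequence
    have hConv : ∀ k, L (k+1) ≤ (1/2) * (L k + L (k+2)) := by
      intro k
      have t1 : Tendsto (fun n => c (k+1) (n+1)) atTop (nhds (L (k+1))) :=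
        (hTend (k+1)).comp (tendsto_add_atTop_nat 1)
      have t2 : Tendsto (fun n => (1/2) * (c k (n+1) + c (k+2) n)) atTop
          (nhds ((1/2) * (L k + L (k+2)))) :=
        (((hTend k).comp (tendsto_add_atTop_nat 1)).add (hTend (k+2))).const_mul _
      exact le_of_tendsto_of_tendsto' t1 t2 (fun n => hRec k n)
    have hIncr : ∀ k, ε ≤ L (k+1) - L k := by
      intro k
      induction k with
      | zero => rw [hL0]; simpa using hL1
      | succ k ih => have := hConv k; linarith
    have hLk : ∀ k : ℕ, (k : ℝ) * ε ≤ L k := by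
      intro k
      induction k with
      | zero => rw [hL0]; simp
      | succ k ih => have := hIncr k; push_cast; linarith
    -- linear growth of the orbit contradicts sublinearity
    have hlow : ∀ k : ℕ, (k : ℝ) * ε - ‖x‖ ≤ ‖T^[k] x‖ := by
      intro k
      have h1 : (k : ℝ) * ε ≤ c k 0 := le_trans (hLk k) (hLle k 0)
      have h2 : c k 0 ≤ ‖T^[k] x‖ + ‖x‖ := by
        simpa [hc] using norm_sub_le (T^[k] x) x
      linarith
    have hx0 := h x hx
    have hev1 : ∀ᶠ n : ℕ in atTop, ‖T^[n] x‖ / n < ε / 4 :=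
      hx0.eventually (gt_mem_nhds (by linarith))
    have hev2 : ∀ᶠ n : ℕ in atTop, ‖x‖ / n < ε / 4 :=
      (tendsto_const_div_atTop_nhds_zero_nat ‖x‖).eventually (gt_mem_nhds (by linarith))
    have hfin : ∀ᶠ n : ℕ in atTop, False := by
      filter_upwards [hev1, hev2, eventually_ge_atTop 1] with n h1 h2 h3
      have hnpos : (0:ℝ) < n := by exact_mod_cast h3
      have b1 : ‖T^[n] x‖ < n * (ε/4) := by rwa [div_lt_iff₀ hnpos, mul_comm] at h1
      have b2 : ‖x‖ < n * (ε/4) := by rwa [div_lt_iff₀ hnpos, mul_comm] at h2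
      have := hlow n
      nlinarith
    simpa using hfin.exists
end

section
/- Let C be a nonempty subset of a real normed space X and let T : C → C be a mapping such that: (a) for every x ∈ C the sequence n ↦ ‖T^{n+1}x − Tⁿx‖ is nonincreasing; (b) there exist an integer k₀ ≥ 1 and a constant M such that ‖Tⁿx − Tⁿy‖ ≤ M‖x − y‖ for all n ≥ k₀ and all x, y ∈ C; (c) inf{‖Tx − x‖ : x ∈ C} = 0. Then for every x ∈ C, limₙ ‖Tⁿx‖/n = 0. -/
lemma iter_norm_bound {X : Type*} [NormedAddCommGroup X] (T : X → X) (y : X)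
    (h : ∀ n : ℕ, ‖T^[n + 1] y - T^[n] y‖ ≤ ‖T y - y‖) (n : ℕ) :
    ‖T^[n] y‖ ≤ ‖y‖ + n * ‖T y - y‖ := by
  induction n with
  | zero => simp
  | succ n ih =>
      have : ‖T^[n + 1] y‖ ≤ ‖T^[n + 1] y - T^[n] y‖ + ‖T^[n] y‖ := by
        have := norm_add_le (T^[n + 1] y - T^[n] y) (T^[n] y)
        simpa using this
      have h2 := h n
      push_cast
      nlinarith

/-- If the displacement sequence of iterates is nonincreasing, the
iterates are eventually uniformly Lipschitz, and `inf {‖Tx - x‖ : x ∈ C} = 0`,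
then `‖Tⁿx‖/n → 0` for every `x ∈ C`. -/
theorem sublinear_growth_of_iterates
    {X : Type*} [NormedAddCommGroup X] [NormedSpace ℝ X]
    (C : Set X) (hne : C.Nonempty) (T : X → X) (hT : Set.MapsTo T C C)
    (ha : ∀ x ∈ C, Antitone fun n : ℕ => ‖T^[n + 1] x - T^[n] x‖)
    (hb : ∃ k₀ : ℕ, 1 ≤ k₀ ∧ ∃ M : ℝ, ∀ n : ℕ, k₀ ≤ n →
      ∀ x ∈ C, ∀ y ∈ C, ‖T^[n] x - T^[n] y‖ ≤ M * ‖x - y‖)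
    (hc : sInf {r : ℝ | ∃ x ∈ C, r = ‖T x - x‖} = 0) :
    ∀ x ∈ C, Filter.Tendsto (fun n : ℕ => ‖T^[n] x‖ / n)
      Filter.atTop (nhds 0) := by
  intro x hx
  obtain ⟨k₀, hk₀, M, hM⟩ := hb
  rw [Metric.tendsto_atTop]
  intro ε hε
  -- find y ∈ C with displacement < ε/2
  have hSne : {r : ℝ | ∃ x ∈ C, r = ‖T x - x‖}.Nonempty := by
    obtain ⟨z, hz⟩ := hne
    exact ⟨‖T z - z‖, z, hz, rfl⟩
  have hSbdd : BddBelow {r : ℝ | ∃ x ∈ C, r = ‖T x - x‖} := by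
    refine ⟨0, ?_⟩
    rintro r ⟨z, hz, rfl⟩
    exact norm_nonneg _
  have hlt : sInf {r : ℝ | ∃ x ∈ C, r = ‖T x - x‖} < ε / 2 := by
    rw [hc]; linarith
  obtain ⟨r, ⟨y, hy, rfl⟩, hrε⟩ := (csInf_lt_iff hSbdd hSne).mp hlt
  -- displacement bound for y
  have hdisp : ∀ n : ℕ, ‖T^[n + 1] y - T^[n] y‖ ≤ ‖T y - y‖ := by
    intro n
    have := ha y hy (Nat.zero_le n)
    simpa using this
  set K : ℝ := M * ‖x - y‖ + ‖y‖ with hK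
  have hKnn : 0 ≤ K := by
    have h1 := hM k₀ le_rfl x hx y hy
    have h2 := norm_nonneg (T^[k₀] x - T^[k₀] y)
    have h3 := norm_nonneg y
    linarith
  -- bound: for n ≥ k₀, ‖Tⁿx‖ ≤ K + n * ‖Ty - y‖
  have hbound : ∀ n : ℕ, k₀ ≤ n → ‖T^[n] x‖ ≤ K + n * ‖T y - y‖ := by
    intro n hn
    have h1 : ‖T^[n] x‖ ≤ ‖T^[n] x - T^[n] y‖ + ‖T^[n] y‖ := by
      have := norm_add_le (T^[n] x - T^[n] y) (T^[n] y)
      simpa using this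
    have h2 := hM n hn x hx y hy
    have h3 := iter_norm_bound T y hdisp n
    simp only [hK]
    linarith
  obtain ⟨N, hN⟩ := exists_nat_gt (K / (ε / 2))
  refine ⟨max (max k₀ N) 1, fun n hn => ?_⟩
  have hn1 : 1 ≤ n := le_trans (le_max_right _ _) hn
  have hnk : k₀ ≤ n := le_trans (le_trans (le_max_left _ _) (le_max_left _ _)) hn
  have hnN : (N : ℝ) ≤ n := by
    exact_mod_cast le_trans (le_trans (le_max_right _ _) (le_max_left _ _)) hn
  have hnpos : (0 : ℝ) < n := by exact_mod_cast hn1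
  have hKn : K / n < ε / 2 := by
    have : K / (ε / 2) < n := lt_of_lt_of_le hN hnN
    rw [div_lt_iff₀ hnpos]
    calc K = (K / (ε / 2)) * (ε / 2) := by field_simp
    _ < n * (ε / 2) := by
        apply mul_lt_mul_of_pos_right this (by linarith)
    _ = ε / 2 * n := by ring
  have hf : ‖T^[n] x‖ / n ≤ K / n + ‖T y - y‖ := by
    have := hbound n hnk
    rw [div_add' _ _ _ (ne_of_gt hnpos)]
    gcongr
    linarith [mul_comm (n : ℝ) ‖T y - y‖]
  have hfnn : 0 ≤ ‖T^[n] x‖ / n := div_nonneg (norm_nonneg _) (le_of_lt hnpos)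
  rw [Real.dist_eq, sub_zero, abs_of_nonneg hfnn]
  calc ‖T^[n] x‖ / n ≤ K / n + ‖T y - y‖ := hf
  _ < ε / 2 + ε / 2 := by linarith
  _ = ε := by ring
end

section
/- Let X = C([0,1]) with the supremum norm, C = {f ∈ X : f(0) = 0 ≤ f(t) ≤ f(1) = 1 for all t ∈ [0,1]}, and T : C → C given by (Tf)(t) = t·f(t). Then T is a (c)-mapping with no fixed point in C, 0 belongs to the norm closure of R(T − I) = {Tf − f : f ∈ C}, and for every f ∈ C, limₙ ‖Tⁿf‖/n = 0 while 0 ∉ R(I − T). -/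
open ContinuousMap

/-- The multiplication operator `(Tf)(t) = t·f(t)` on `C([0,1])`. -/
noncomputable def mulT : C(Set.Icc (0:ℝ) 1, ℝ) → C(Set.Icc (0:ℝ) 1, ℝ) :=
  fun f => ⟨fun t => (t : ℝ) * f t, continuous_subtype_val.mul f.continuous⟩

/-- The set `C = {f ∈ C([0,1]) : f(0) = 0 ≤ f(t) ≤ f(1) = 1}`. -/
def Cone : Set C(Set.Icc (0:ℝ) 1, ℝ) :=
  {f | f ⟨0, by norm_num⟩ = 0 ∧ (∀ t, 0 ≤ f t ∧ f t ≤ 1) ∧ f ⟨1, by norm_num⟩ = 1}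

/-! Pointwise `(1 + t)(f - g) = (tf - g) - (tg - f)` and `2t ≤ 1 + t`, so
`2‖Tf - Tg‖ ≤ ‖Tf - g‖ + ‖Tg - f‖`: `T` is a (c)-mapping with `a = 0`, `c = 1/2`.
A fixed point `f = tf` vanishes wherever `t ≠ 1`, yet by the intermediate value theorem every
`f ∈ C` takes the value `1/2` somewhere, necessarily at `t = 1` where `f(1) = 1`.
The powers `tⁿ` lie in `C` and `‖Ttⁿ - tⁿ‖ = sup tⁿ(1 - t) ≤ 1/(n + 1)`, while `C` lies in
the unit ball, so `‖Tⁿf‖/n ≤ 1/n`. -/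

local notation "𝕀" => Set.Icc (0:ℝ) 1

def IsCMappingOn {E : Type*} [SeminormedAddCommGroup E] (T : E → E) (s : Set E) : Prop :=
  ∃ a c : ℝ, a ∈ Set.Icc (0:ℝ) 1 ∧ c ∈ Set.Icc (0:ℝ) 1 ∧ 0 < c ∧ a + 2 * c = 1 ∧
    ∀ f ∈ s, ∀ g ∈ s, ‖T f - T g‖ ≤ a * ‖f - g‖ + c * (‖T f - g‖ + ‖T g - f‖)

theorem IsCMappingOn.of_two_mul_norm_le {E : Type*} [SeminormedAddCommGroup E] {T : E → E}
    {s : Set E} (h : ∀ f ∈ s, ∀ g ∈ s, 2 * ‖T f - T g‖ ≤ ‖T f - g‖ + ‖T g - f‖) :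
    IsCMappingOn T s :=
  ⟨0, 1 / 2, by norm_num, by norm_num, by norm_num, by norm_num, fun f hf g hg => by
    linarith [h f hf g hg]⟩

theorem pow_mul_one_sub_le {t : ℝ} (ht₀ : 0 ≤ t) (ht₁ : t ≤ 1) (n : ℕ) :
    t ^ n * (1 - t) ≤ 1 / (n + 1) := by
  rw [le_div_iff₀ (by positivity)]
  have hsum : ((n:ℝ) + 1) * t ^ n ≤ ∑ i ∈ Finset.range (n + 1), t ^ i := by
    simpa using Finset.card_nsmul_le_sum (Finset.range (n + 1)) (t ^ ·) (t ^ n)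
      fun i hi => pow_le_pow_of_le_one ht₀ ht₁ (Finset.mem_range_succ_iff.1 hi)
  have hgeom := geom_sum_mul t (n + 1)
  nlinarith [mul_le_mul_of_nonneg_right hsum (sub_nonneg.2 ht₁), pow_nonneg ht₀ (n + 1)]

def coord : C(𝕀, ℝ) := ⟨Subtype.val, continuous_subtype_val⟩

@[simp] theorem coord_apply (t : 𝕀) : coord t = t := rfl

@[simp] theorem mulT_apply (f : C(𝕀, ℝ)) (t : 𝕀) : mulT f t = t * f t := rfl

theorem two_mul_norm_mulT_sub_le (f g : C(𝕀, ℝ)) :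
    2 * ‖mulT f - mulT g‖ ≤ ‖mulT f - g‖ + ‖mulT g - f‖ := by
  suffices ‖mulT f - mulT g‖ ≤ (‖mulT f - g‖ + ‖mulT g - f‖) / 2 by linarith
  refine (ContinuousMap.norm_le _ (by positivity)).2 fun t => ?_
  have ht₀ : (0:ℝ) ≤ t := t.2.1
  have ht₁ : (t:ℝ) ≤ 1 := t.2.2
  have key : (1 + t) * |f t - g t| ≤ ‖mulT f - g‖ + ‖mulT g - f‖ :=
    calc (1 + t) * |f t - g t| = |(t * f t - g t) - (t * g t - f t)| := by
          rw [← abs_of_nonneg (by linarith : (0:ℝ) ≤ 1 + t), ← abs_mul]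
          ring_nf
      _ ≤ |(mulT f - g) t| + |(mulT g - f) t| := abs_sub _ _
      _ ≤ ‖mulT f - g‖ + ‖mulT g - f‖ :=
          add_le_add ((mulT f - g).norm_coe_le_norm t) ((mulT g - f).norm_coe_le_norm t)
  calc ‖(mulT f - mulT g) t‖ = t * |f t - g t| := by
        simp only [coe_sub, Pi.sub_apply, mulT_apply, Real.norm_eq_abs, ← mul_sub, abs_mul,
          abs_of_nonneg ht₀]
    _ ≤ (1 + t) / 2 * |f t - g t| := by gcongr; linarith
    _ ≤ (‖mulT f - g‖ + ‖mulT g - f‖) / 2 := by linarith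

theorem isCMappingOn_mulT : IsCMappingOn mulT Cone :=
  .of_two_mul_norm_le fun f _ g _ => two_mul_norm_mulT_sub_le f g

theorem mapsTo_mulT_Cone : Set.MapsTo mulT Cone Cone := by
  rintro f ⟨-, hf, h₁⟩
  refine ⟨by simp, fun t => ?_, by simpa using h₁⟩
  exact ⟨mul_nonneg t.2.1 (hf t).1, mul_le_one₀ t.2.2 (hf t).1 (hf t).2⟩

theorem norm_le_one_of_mem_Cone {f : C(𝕀, ℝ)} (hf : f ∈ Cone) : ‖f‖ ≤ 1 :=
  (ContinuousMap.norm_le _ zero_le_one).2 fun t =>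
    abs_le.2 ⟨by linarith [(hf.2.1 t).1], (hf.2.1 t).2⟩

theorem mulT_ne_self_of_mem_Cone {f : C(𝕀, ℝ)} (hf : f ∈ Cone) : mulT f ≠ f := by
  intro hfix
  obtain ⟨t, ht⟩ : (1 / 2 : ℝ) ∈ Set.range f :=
    intermediate_value_univ 0 1 f.continuous ⟨by simp [show f 0 = 0 from hf.1],
      by simp [show f 1 = 1 from hf.2.2]; norm_num⟩
  have ht₁ : t = 1 := by
    have := DFunLike.congr_fun hfix t
    simp only [mulT_apply, ht] at this
    exact Subtype.ext (by rw [Set.Icc.coe_one]; linarith)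
  have h₁ : f 1 = 1 := hf.2.2
  rw [ht₁] at ht
  linarith

theorem coord_pow_mem_Cone {n : ℕ} (hn : n ≠ 0) : coord ^ n ∈ Cone :=
  ⟨by simp [hn], fun t => ⟨pow_nonneg t.2.1 n, pow_le_one₀ t.2.1 t.2.2⟩, by simp⟩

theorem norm_mulT_coord_pow_sub_le (n : ℕ) : ‖mulT (coord ^ n) - coord ^ n‖ ≤ 1 / (n + 1) := by
  refine (ContinuousMap.norm_le _ (by positivity)).2 fun t => ?_
  have ht₀ : (0:ℝ) ≤ t := t.2.1
  have ht₁ : (t:ℝ) ≤ 1 := t.2.2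
  have hpow : 0 ≤ (t:ℝ) ^ n := pow_nonneg ht₀ n
  calc ‖(mulT (coord ^ n) - coord ^ n) t‖ = (t:ℝ) ^ n * (1 - t) := by
        simp only [coe_sub, Pi.sub_apply, mulT_apply, coe_pow, Pi.pow_apply, coord_apply,
          Real.norm_eq_abs]
        rw [abs_of_nonpos (by nlinarith)]
        ring
    _ ≤ 1 / (n + 1) := pow_mul_one_sub_le ht₀ ht₁ n

theorem zero_mem_closure_range_mulT_sub :
    (0 : C(𝕀, ℝ)) ∈ closure {g | ∃ f ∈ Cone, g = mulT f - f} := by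
  refine mem_closure_of_tendsto (f := fun n : ℕ => mulT (coord ^ n) - coord ^ n)
    (squeeze_zero_norm norm_mulT_coord_pow_sub_le tendsto_one_div_add_atTop_nhds_zero_nat) ?_
  filter_upwards [Filter.eventually_ne_atTop 0] with n hn
  exact ⟨coord ^ n, coord_pow_mem_Cone hn, rfl⟩

theorem tendsto_norm_iterate_mulT_div (f : C(𝕀, ℝ)) (hf : f ∈ Cone) :
    Filter.Tendsto (fun n : ℕ => ‖mulT^[n] f‖ / n) Filter.atTop (nhds 0) :=
  squeeze_zero (fun n => by positivity)
    (fun n => div_le_div_of_nonneg_right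
      (norm_le_one_of_mem_Cone (mapsTo_mulT_Cone.iterate n hf)) n.cast_nonneg)
    tendsto_one_div_atTop_nhds_zero_nat

/-- On `C = {f : f(0) = 0 ≤ f ≤ f(1) = 1}`, the map `Tf = t·f` is a
(c)-mapping with no fixed point, `0 ∈ closure R(T - I)`, `‖Tⁿf‖/n → 0` for every
`f ∈ C`, yet `0 ∉ R(I - T)`. -/
theorem mulT_on_Cone_properties :
    Set.MapsTo mulT Cone Cone ∧
    (∃ a c : ℝ, a ∈ Set.Icc (0:ℝ) 1 ∧ c ∈ Set.Icc (0:ℝ) 1 ∧ 0 < c ∧ a + 2 * c = 1 ∧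
      ∀ f ∈ Cone, ∀ g ∈ Cone,
        ‖mulT f - mulT g‖ ≤ a * ‖f - g‖ + c * (‖mulT f - g‖ + ‖mulT g - f‖)) ∧
    (∀ f ∈ Cone, mulT f ≠ f) ∧
    ((0 : C(Set.Icc (0:ℝ) 1, ℝ)) ∈
      closure {g : C(Set.Icc (0:ℝ) 1, ℝ) | ∃ f ∈ Cone, g = mulT f - f}) ∧
    (∀ f ∈ Cone, Filter.Tendsto (fun n : ℕ => ‖mulT^[n] f‖ / n)
      Filter.atTop (nhds 0)) ∧
    ((0 : C(Set.Icc (0:ℝ) 1, ℝ)) ∉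
      {g : C(Set.Icc (0:ℝ) 1, ℝ) | ∃ f ∈ Cone, g = f - mulT f}) := by
  refine ⟨mapsTo_mulT_Cone, isCMappingOn_mulT, fun f hf => mulT_ne_self_of_mem_Cone hf,
    zero_mem_closure_range_mulT_sub, tendsto_norm_iterate_mulT_div, ?_⟩
  rintro ⟨f, hf, hzero⟩
  exact mulT_ne_self_of_mem_Cone hf (sub_eq_zero.1 hzero.symm).symm
end
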